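/- arXiv:1801.06026 — 10 statements merged into one kernel-verified Lean document; each statement's English description precedes it below -/
import Mathlib

section
/- Let v be a nonzero complex number with v + v^{-1} ≠ 0, set q = v^2, [2]_v = v + v^{-1}, [3]_v = v^2 + 1 + v^{-2}, and let B_v = [[-1/[2]_v, [3]_v/[2]_v^2], [1, 1/[2]_v]]. For every integer s ≥ 1, with D_s = diag((-1)^s q^s, 1), one has the matrix identity D_s · B_v · D_s^{-1} · B_v = P_s(v), where P_s(v) = [[(1+(-1)^s q^s [3]_v)/[2]_v^2, ((-1)^s q^s - 1)[3]_v/[2]_v^3], [(1-(-1)^s q^{-s})/[2]_v, (1+(-1)^s q^{-s}[3]_v)/[2]_v^2]]. -/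
/-- The quantum integer [2]_v = v + v⁻¹. -/
noncomputable def qtwo (v : ℂ) : ℂ := v + v⁻¹

/-- The quantum integer [3]_v = v² + 1 + v⁻². -/
noncomputable def qthree (v : ℂ) : ℂ := v ^ 2 + 1 + v⁻¹ ^ 2

/-- The change of coordinates matrix B_v between the dual bases B_T and B_{T'}. -/
noncomputable def Bmat (v : ℂ) : Matrix (Fin 2) (Fin 2) ℂ :=
  !![-1 / qtwo v, qthree v / (qtwo v) ^ 2;
     1, 1 / qtwo v]

/-- The diagonal matrix D_s = diag((-1)^s q^s, 1) with q = v². -/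
noncomputable def Dmat (v : ℂ) (s : ℕ) : Matrix (Fin 2) (Fin 2) ℂ :=
  !![(-1) ^ s * (v ^ 2) ^ s, 0; 0, 1]

/-- The 2×2 block P_s(v) of the matrix of ρ_T(σ₁^s σ₂^{-s}) at q = v². -/
noncomputable def Pmat (v : ℂ) (s : ℕ) : Matrix (Fin 2) (Fin 2) ℂ :=
  !![(1 + (-1) ^ s * (v ^ 2) ^ s * qthree v) / (qtwo v) ^ 2,
     ((-1) ^ s * (v ^ 2) ^ s - 1) * qthree v / (qtwo v) ^ 3;
     (1 - (-1) ^ s * ((v ^ 2) ^ s)⁻¹) / qtwo v,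
     (1 + (-1) ^ s * ((v ^ 2) ^ s)⁻¹ * qthree v) / (qtwo v) ^ 2]


private lemma aux_key (t u w e : ℂ) (ht : t ≠ 0) (hw : w ≠ 0) (he2 : e * e = 1) :
    !![e * w, 0; 0, 1] * !![-1 / t, u / t ^ 2; 1, 1 / t] * !![(e * w)⁻¹, 0; 0, 1] *
      !![-1 / t, u / t ^ 2; 1, 1 / t] =
    !![(1 + e * w * u) / t ^ 2, (e * w - 1) * u / t ^ 3;
       (1 - e * w⁻¹) / t, (1 + e * w⁻¹ * u) / t ^ 2] := by
  have he : e⁻¹ = e := inv_eq_of_mul_eq_one_right he2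
  have hiw : (e * w)⁻¹ = e * w⁻¹ := by rw [mul_inv, he]
  ext i j
  fin_cases i <;> fin_cases j
  · simp only [Matrix.mul_apply, Fin.sum_univ_two, hiw,
      Matrix.cons_val', Matrix.cons_val_zero, Matrix.cons_val_one, Matrix.head_cons,
      Matrix.empty_val', Matrix.cons_val_fin_one, Matrix.head_fin_const, Fin.mk_zero,
      Fin.mk_one, Fin.isValue, Matrix.of_apply]
    field_simp
    linear_combination (t * w) * he2
  · simp only [Matrix.mul_apply, Fin.sum_univ_two, hiw,
      Matrix.cons_val', Matrix.cons_val_zero, Matrix.cons_val_one, Matrix.head_cons,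
      Matrix.empty_val', Matrix.cons_val_fin_one, Matrix.head_fin_const, Fin.mk_zero,
      Fin.mk_one, Fin.isValue, Matrix.of_apply]
    field_simp
    linear_combination (-(u * t * w)) * he2
  · simp only [Matrix.mul_apply, Fin.sum_univ_two, hiw,
      Matrix.cons_val', Matrix.cons_val_zero, Matrix.cons_val_one, Matrix.head_cons,
      Matrix.empty_val', Matrix.cons_val_fin_one, Matrix.head_fin_const, Fin.mk_zero,
      Fin.mk_one, Fin.isValue, Matrix.of_apply]
    field_simp
    ring
  · simp only [Matrix.mul_apply, Fin.sum_univ_two, hiw,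
      Matrix.cons_val', Matrix.cons_val_zero, Matrix.cons_val_one, Matrix.head_cons,
      Matrix.empty_val', Matrix.cons_val_fin_one, Matrix.head_fin_const, Fin.mk_zero,
      Fin.mk_one, Fin.isValue, Matrix.of_apply]
    field_simp
    ring

/-- The matrix identity D_s · B_v · D_s⁻¹ · B_v = P_s(v). -/
theorem stmt_3 (v : ℂ) (hv : v ≠ 0) (h2 : v + v⁻¹ ≠ 0) (s : ℕ) (hs : 1 ≤ s) :
    Dmat v s * Bmat v * (Dmat v s)⁻¹ * Bmat v = Pmat v s := by
  have ha : ((-1 : ℂ) ^ s * (v ^ 2) ^ s) ≠ 0 := by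
    apply mul_ne_zero <;> [skip; skip] <;>
      exact pow_ne_zero _ (by simp [hv])
  have hD : (Dmat v s)⁻¹ = !![((-1 : ℂ) ^ s * (v ^ 2) ^ s)⁻¹, 0; 0, 1] := by
    apply Matrix.inv_eq_right_inv
    ext i j
    fin_cases i <;> fin_cases j <;>
      simp [Dmat, Matrix.mul_apply, Fin.sum_univ_two] <;> field_simp <;> ring
  rw [hD]
  have ht : qtwo v ≠ 0 := h2
  have h4 : ((v : ℂ) ^ 2) ^ s ≠ 0 := pow_ne_zero _ (pow_ne_zero _ hv)
  have he2 : ((-1 : ℂ) ^ s) * ((-1) ^ s) = 1 := by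
    rw [← pow_add, ← two_mul, pow_mul]; norm_num
  simp only [Dmat, Bmat, Pmat]
  exact aux_key (qtwo v) (qthree v) ((v ^ 2) ^ s) ((-1) ^ s) ht h4 he2
end

section
/- Let v be a nonzero complex number with v + v^{-1} ≠ 0, set q = v^2, [2]_v = v + v^{-1}, [3]_v = v^2 + 1 + v^{-2}, and for an integer s ≥ 1 let P_s(v) = [[(1+(-1)^s q^s [3]_v)/[2]_v^2, ((-1)^s q^s - 1)[3]_v/[2]_v^3], [(1-(-1)^s q^{-s})/[2]_v, (1+(-1)^s q^{-s}[3]_v)/[2]_v^2]]. Then det P_s(v) = 1. -/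
/-- det P_s(v) = 1. -/
theorem stmt_4 (v : ℂ) (hv : v ≠ 0) (h2 : v + v⁻¹ ≠ 0) (s : ℕ) (hs : 1 ≤ s) :
    (Pmat v s).det = 1 := by
  have hx : (v ^ 2) ^ s ≠ 0 := pow_ne_zero _ (pow_ne_zero _ hv)
  have he : ((-1 : ℂ)) ^ s * (-1) ^ s = 1 := by
    rw [← pow_add, ← two_mul, pow_mul]; norm_num
  have hvv : v * v⁻¹ = 1 := mul_inv_cancel₀ hv
  have hxx : (v ^ 2) ^ s * ((v ^ 2) ^ s)⁻¹ = 1 := mul_inv_cancel₀ hx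
  unfold Pmat; rw [Matrix.det_fin_two_of]
  unfold qtwo qthree
  generalize (v ^ 2 : ℂ) ^ s = x at hx he hxx ⊢
  generalize ((-1 : ℂ)) ^ s = e at he ⊢
  set q3 : ℂ := v ^ 2 + 1 + v⁻¹ ^ 2 with hq3
  set q2 : ℂ := v + v⁻¹ with hq2
  rw [div_mul_div_comm, div_mul_div_comm, ← pow_add, ← pow_succ]
  norm_num
  rw [div_sub_div_same, div_eq_one_iff_eq (pow_ne_zero 4 h2)]
  linear_combination (q3 * (q3 + 1) * x * x⁻¹) * he + (q3 * (q3 + 1)) * hxx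
    + (-4 * (q3 + 1) - 4 * (v * v⁻¹ - 1)) * hvv
end

section
/- Let v be a nonzero complex number with v + v^{-1} ≠ 0, set q = v^2, [2]_v = v + v^{-1}, [3]_v = v^2 + 1 + v^{-2}, and for an integer s ≥ 1 let P_s(v) = [[(1+(-1)^s q^s [3]_v)/[2]_v^2, ((-1)^s q^s - 1)[3]_v/[2]_v^3], [(1-(-1)^s q^{-s})/[2]_v, (1+(-1)^s q^{-s}[3]_v)/[2]_v^2]]. Then tr P_s(v) = (-1)^s (q^s + q^{-s}) + (-1)^{s+1} ((v^s + (-1)^{s+1} v^{-s})/(v + v^{-1}))^2. -/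
/-- The trace formula for P_s(v). -/
theorem stmt_5 (v : ℂ) (hv : v ≠ 0) (h2 : v + v⁻¹ ≠ 0) (s : ℕ) (hs : 1 ≤ s) :
    (Pmat v s).trace =
      (-1) ^ s * ((v ^ 2) ^ s + ((v ^ 2) ^ s)⁻¹) +
      (-1) ^ (s + 1) * ((v ^ s + (-1) ^ (s + 1) * (v ^ s)⁻¹) / (v + v⁻¹)) ^ 2 := by
  have hvs : (v : ℂ) ^ s ≠ 0 := pow_ne_zero _ hv
  have hq : ((v ^ 2) ^ s : ℂ) = (v ^ s) ^ 2 := by ring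
  rw [Matrix.trace_fin_two]
  show (1 + (-1) ^ s * (v ^ 2) ^ s * qthree v) / (qtwo v) ^ 2 +
      (1 + (-1) ^ s * ((v ^ 2) ^ s)⁻¹ * qthree v) / (qtwo v) ^ 2 = _
  rw [qtwo, qthree, hq]
  have h3 : v ^ 2 + 1 ≠ 0 := by
    intro h
    apply h2
    have : v + v⁻¹ = (v ^ 2 + 1) * v⁻¹ := by field_simp
    rw [this, h, zero_mul]
  have hform : v + v⁻¹ = (v ^ 2 + 1) / v := by field_simp
  rw [hform]
  obtain ⟨w, hw⟩ : ∃ w : ℂ, v ^ s = w := ⟨_, rfl⟩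
  rw [hw] at hvs ⊢
  rcases Nat.even_or_odd s with hpar | hpar
  · rw [hpar.neg_one_pow, (Odd.neg_one_pow (Even.add_one hpar))]
    field_simp [hv, hvs, h3]
    ring
  · rw [hpar.neg_one_pow, (Even.neg_one_pow (Odd.add_one hpar))]
    field_simp [hv, hvs, h3]
    ring
end

section
/- For every integer r ≥ 5 with r ≠ 6 and r ≠ 10, there exists a primitive r-th root of unity ζ ∈ ℂ such that Re(ζ^2) > Re(ζ) (equivalently, the real number f_2(ζ) = ζ^2 + ζ^{-2} - ζ - ζ^{-1} + 2 satisfies f_2(ζ) > 2). -/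
open Real Complex

lemma aux_key_s7 (r k : ℕ) (hr : r ≠ 0) (hc : Nat.Coprime k r)
    (h1 : (r : ℝ) < 3 * k) (h2 : 2 * (k : ℝ) < r) :
    ∃ ζ : ℂ, IsPrimitiveRoot ζ r ∧ ζ.re < (ζ ^ 2).re := by
  refine ⟨Complex.exp (2 * Real.pi * Complex.I * (k / r)), 
    Complex.isPrimitiveRoot_exp_of_coprime k r hr hc, ?_⟩
  have hr0 : (0 : ℝ) < r := by positivity
  set θ : ℝ := 2 * Real.pi * k / r with hθ
  have harg : (2 * Real.pi * Complex.I * (k / r)) = (θ : ℂ) * Complex.I := by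
    push_cast [hθ]; ring
  have hre : (Complex.exp (2 * Real.pi * Complex.I * (k / r))).re = Real.cos θ := by
    rw [harg, Complex.exp_ofReal_mul_I_re]
  have hre2 : ((Complex.exp (2 * Real.pi * Complex.I * (k / r))) ^ 2).re
      = Real.cos (2 * θ) := by
    rw [← Complex.exp_nat_mul, show ((2:ℕ):ℂ) * (2 * Real.pi * Complex.I * (k / r))
        = ((2 * θ : ℝ) : ℂ) * Complex.I by push_cast [hθ]; ring,
      Complex.exp_ofReal_mul_I_re]
  rw [hre, hre2, Real.cos_two_mul]
  -- show cos θ < -1/2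
  have hπ := Real.pi_pos
  have hθlt : θ < Real.pi := by
    rw [hθ, div_lt_iff₀ hr0]; nlinarith
  have hθgt : 2 * Real.pi / 3 < θ := by
    rw [hθ, lt_div_iff₀ hr0]; nlinarith
  have hcos : Real.cos θ < -(1/2) := by
    have := Real.cos_lt_cos_of_nonneg_of_le_pi (by positivity) hθlt.le hθgt
    rwa [show 2 * Real.pi / 3 = Real.pi - Real.pi / 3 by ring, Real.cos_pi_sub,
      Real.cos_pi_div_three] at this
  nlinarith [Real.cos_le_one θ]

/-- For every r ≥ 5 with r ≠ 6 and r ≠ 10, there exists a primitive r-th root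
of unity ζ with Re(ζ²) > Re(ζ). -/
theorem stmt_7 (r : ℕ) (hr : 5 ≤ r) (hr6 : r ≠ 6) (hr10 : r ≠ 10) :
    ∃ ζ : ℂ, IsPrimitiveRoot ζ r ∧ ζ.re < (ζ ^ 2).re := by
  have hr0 : r ≠ 0 := by omega
  rcases Nat.even_or_odd r with he | ho
  · rcases Nat.even_or_odd (r / 2) with he2 | ho2
    · -- r ≡ 0 mod 4 : r = 4m, m ≥ 2, k = 2m-1
      obtain ⟨m, hm2, rfl⟩ : ∃ m, 2 ≤ m ∧ r = 4 * m := by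
        rcases he with ⟨a, ha⟩; rcases he2 with ⟨b, hb⟩; exact ⟨b, by omega, by omega⟩
      refine aux_key_s7 _ (2 * m - 1) hr0 ?_ ?_ ?_
      · have : IsCoprime ((2 * m - 1 : ℕ) : ℤ) ((4 * m : ℕ) : ℤ) := by
          refine ⟨(2 * m - 1 : ℕ), -((m : ℤ) - 1), ?_⟩
          have h1 : ((2 * m - 1 : ℕ) : ℤ) = 2 * m - 1 := by push_cast [Nat.cast_sub]; omega
          rw [h1]; push_cast; ring
        exact Nat.isCoprime_iff_coprime.mp this
      · have : ((2 * m - 1 : ℕ) : ℝ) = 2 * m - 1 := by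
          have : ((2 * m - 1 : ℕ) : ℤ) = 2 * m - 1 := by omega
          exact_mod_cast this
        rw [this]; push_cast
        have : (2 : ℝ) ≤ m := by exact_mod_cast hm2
        nlinarith
      · have : ((2 * m - 1 : ℕ) : ℝ) = 2 * m - 1 := by
          have : ((2 * m - 1 : ℕ) : ℤ) = 2 * m - 1 := by omega
          exact_mod_cast this
        rw [this]; push_cast
        have : (2 : ℝ) ≤ m := by exact_mod_cast hm2
        nlinarith
    · -- r ≡ 2 mod 4 : r = 4j+6, j ≥ 2, k = 2j+1
      obtain ⟨j, hj2, rfl⟩ : ∃ j, 2 ≤ j ∧ r = 4 * j + 6 := by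
        rcases he with ⟨a, ha⟩; rcases ho2 with ⟨b, hb⟩; exact ⟨b - 1, by omega, by omega⟩
      refine aux_key_s7 _ (2 * j + 1) hr0 ?_ ?_ ?_
      · have : IsCoprime ((2 * j + 1 : ℕ) : ℤ) ((4 * j + 6 : ℕ) : ℤ) := by
          refine ⟨1 - 2 * j * (j + 1), (j : ℤ) ^ 2, ?_⟩
          push_cast; ring
        exact Nat.isCoprime_iff_coprime.mp this
      · push_cast
        have : (2 : ℝ) ≤ j := by exact_mod_cast hj2
        nlinarith
      · push_cast; nlinarith [Nat.cast_nonneg (α := ℝ) j]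
  · -- r odd: r = 2m+1, m ≥ 2, k = m
    obtain ⟨m, hm2, rfl⟩ : ∃ m, 2 ≤ m ∧ r = 2 * m + 1 := by
      rcases ho with ⟨a, ha⟩; exact ⟨a, by omega, by omega⟩
    refine aux_key_s7 _ m hr0 ?_ ?_ ?_
    · have : IsCoprime ((m : ℕ) : ℤ) ((2 * m + 1 : ℕ) : ℤ) := ⟨-2, 1, by push_cast; ring⟩
      exact Nat.isCoprime_iff_coprime.mp this
    · push_cast
      have : (2 : ℝ) ≤ m := by exact_mod_cast hm2
      nlinarith
    · push_cast; nlinarith [Nat.cast_nonneg (α := ℝ) m]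
end

section
/- For every integer r ≥ 5 with r ≠ 6 and r ≠ 10, there exists a nonzero complex number v such that q = v^2 is a primitive r-th root of unity, v + v^{-1} ≠ 0, and the matrix P_2(v) = [[(1+q^2 [3]_v)/[2]_v^2, (q^2 - 1)[3]_v/[2]_v^3], [(1-q^{-2})/[2]_v, (1+q^{-2}[3]_v)/[2]_v^2]] has infinite order in PGL_2(ℂ), i.e. for every integer k ≥ 1 and every complex number c, P_2(v)^k ≠ c·I. -/
/-- The 2×2 block P₂(v) of the matrix of ρ_T(σ₁² σ₂⁻²) at q = v². -/
noncomputable def Ptwo (v : ℂ) : Matrix (Fin 2) (Fin 2) ℂ :=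
  !![(1 + (v ^ 2) ^ 2 * qthree v) / (qtwo v) ^ 2,
     ((v ^ 2) ^ 2 - 1) * qthree v / (qtwo v) ^ 3;
     (1 - ((v ^ 2) ^ 2)⁻¹) / qtwo v,
     (1 + ((v ^ 2) ^ 2)⁻¹ * qthree v) / (qtwo v) ^ 2]

/-- Cayley–Hamilton for 2×2 complex matrices. -/
lemma aux_ch2 (M : Matrix (Fin 2) (Fin 2) ℂ) :
    M ^ 2 = M.trace • M - M.det • (1 : Matrix (Fin 2) (Fin 2) ℂ) := by
  ext i j
  fin_cases i <;> fin_cases j <;>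
    simp [pow_two, Matrix.mul_apply, Matrix.trace, Matrix.det_fin_two,
      Fin.sum_univ_two, Matrix.one_apply] <;> ring

/-- A 2×2 complex matrix with determinant 1 and real trace > 2 has infinite
order in PGL₂. -/
lemma aux_key_s8 (M : Matrix (Fin 2) (Fin 2) ℂ) (hdet : M.det = 1) (t : ℝ)
    (htr : M.trace = (t : ℂ)) (ht : 2 < t) :
    ∀ k : ℕ, 1 ≤ k → ∀ c : ℂ, M ^ k ≠ c • (1 : Matrix (Fin 2) (Fin 2) ℂ) := by
  set l : ℝ := (t + Real.sqrt (t ^ 2 - 4)) / 2 with hl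
  have hs : Real.sqrt (t ^ 2 - 4) ^ 2 = t ^ 2 - 4 :=
    Real.sq_sqrt (by nlinarith)
  have hsnn : 0 ≤ Real.sqrt (t ^ 2 - 4) := Real.sqrt_nonneg _
  have hl1 : 1 < l := by rw [hl]; linarith
  have hl0 : l ≠ 0 := ne_of_gt (by linarith)
  have hquad : l ^ 2 - t * l + 1 = 0 := by
    have h1 : 2 * l - t = Real.sqrt (t ^ 2 - 4) := by rw [hl]; ring
    have h2 : (2 * l - t) ^ 2 = t ^ 2 - 4 := by rw [h1, hs]
    linear_combination h2 / 4
  have hinv : l⁻¹ = t - l := inv_eq_of_mul_eq_one_right (by nlinarith [hquad])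
  set a : ℕ → ℝ := fun k => l ^ k + l⁻¹ ^ k with ha
  have ha0 : a 0 = 2 := by norm_num [ha]
  have ha1 : a 1 = t := by simp only [ha, pow_one, hinv]; ring
  have hl2 : l ^ 2 = t * l - 1 := by linarith [hquad]
  have hi2 : l⁻¹ ^ 2 = t * l⁻¹ - 1 := by rw [hinv]; linear_combination hquad
  have harec : ∀ k, a (k + 2) = t * a (k + 1) - a k := by
    intro k
    simp only [ha]
    rw [pow_add l k 2, pow_add l⁻¹ k 2, hl2, hi2, pow_add, pow_add]
    ring
  have hrec : ∀ k, M ^ (k + 2) = M.trace • M ^ (k + 1) - M ^ k := by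
    intro k
    rw [pow_add, aux_ch2 M, hdet, one_smul, Matrix.mul_sub, Matrix.mul_smul,
      mul_one, ← pow_succ]
  have htrk : ∀ k, (M ^ k).trace = ((a k : ℝ) : ℂ) := by
    have H : ∀ k, (M ^ k).trace = ((a k : ℝ) : ℂ) ∧
        (M ^ (k + 1)).trace = ((a (k + 1) : ℝ) : ℂ) := by
      intro k
      induction k with
      | zero =>
        refine ⟨?_, ?_⟩
        · rw [pow_zero, Matrix.trace_one, ha0]
          norm_num
        · simpa [ha1] using htr
      | succ n ih =>
        refine ⟨ih.2, ?_⟩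
        rw [show n + 1 + 1 = n + 2 from rfl, hrec n, Matrix.trace_sub,
          Matrix.trace_smul, htr, ih.1, ih.2, harec n, smul_eq_mul]
        push_cast
        ring
    exact fun k => (H k).1
  have hak : ∀ k, 1 ≤ k → 2 < a k := by
    intro k hk
    have hy : 1 < l ^ k := one_lt_pow₀ hl1 (by omega)
    have hy0 : 0 < l ^ k := by linarith
    have hik : l⁻¹ ^ k = (l ^ k)⁻¹ := by rw [inv_pow]
    simp only [ha, hik]
    rw [← sub_pos]
    have hrw : l ^ k + (l ^ k)⁻¹ - 2 = (l ^ k - 1) ^ 2 / l ^ k := by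
      field_simp; ring
    rw [hrw]
    apply div_pos _ hy0
    have : l ^ k - 1 ≠ 0 := ne_of_gt (by linarith)
    positivity
  intro k hk c heq
  have hdk : (M ^ k).det = 1 := by rw [Matrix.det_pow, hdet, one_pow]
  have hc2 : c ^ 2 = 1 := by
    have h := hdk
    rw [heq] at h
    simpa [Matrix.det_smul, Fintype.card_fin] using h
  have htk : ((a k : ℝ) : ℂ) = 2 * c := by
    rw [← htrk k, heq, Matrix.trace_smul, Matrix.trace_one, smul_eq_mul]
    norm_num [Fintype.card_fin]
    ring
  have hcases : c = 1 ∨ c = -1 := by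
    have h : (c - 1) * (c + 1) = 0 := by linear_combination hc2
    rcases mul_eq_zero.mp h with h | h
    · exact Or.inl (sub_eq_zero.mp h)
    · exact Or.inr (eq_neg_of_add_eq_zero_left h)
  have h2k := hak k hk
  rcases hcases with rfl | rfl
  · have : (a k : ℝ) = 2 := by exact_mod_cast htk
    linarith
  · have : (a k : ℝ) = -2 := by
      have : ((a k : ℝ) : ℂ) = -2 := by rw [htk]; ring
      exact_mod_cast this
    linarith

/-- The trace of P₂(v). -/
lemma aux_trace (v : ℂ) (hv : v ≠ 0) (h2 : qtwo v ≠ 0) :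
    (Ptwo v).trace = (v^2 + (v^2)⁻¹) * (v^2 + (v^2)⁻¹ - 1) := by
  have tr : (Ptwo v).trace =
      ((1 + (v ^ 2) ^ 2 * qthree v) + (1 + ((v ^ 2) ^ 2)⁻¹ * qthree v)) / (qtwo v)^2 := by
    simp [Ptwo, Matrix.trace, Fin.sum_univ_two, add_div]
  rw [tr, div_eq_iff (pow_ne_zero 2 h2)]
  unfold qtwo qthree
  field_simp
  ring

/-- The determinant of P₂(v). -/
lemma aux_det (v : ℂ) (hv : v ≠ 0) (h2 : qtwo v ≠ 0) : (Ptwo v).det = 1 := by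
  have hd : (Ptwo v).det =
      ((1 + (v ^ 2) ^ 2 * qthree v) * (1 + ((v ^ 2) ^ 2)⁻¹ * qthree v)
        - ((v ^ 2) ^ 2 - 1) * qthree v * (1 - ((v ^ 2) ^ 2)⁻¹)) / (qtwo v)^4 := by
    simp only [Ptwo, Matrix.det_fin_two_of, div_mul_div_comm]
    rw [show (qtwo v)^2 * (qtwo v)^2 = (qtwo v)^4 by ring,
        show (qtwo v)^3 * (qtwo v) = (qtwo v)^4 by ring, div_sub_div_same]
  rw [hd, div_eq_one_iff_eq (pow_ne_zero 4 h2)]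
  unfold qtwo qthree
  field_simp
  have hvv : v * v⁻¹ = 1 := mul_inv_cancel₀ hv
  ring

/-- There exists m coprime to r with r/3 < m < r/2. -/
lemma aux_exists_m (r : ℕ) (hr : 5 ≤ r) (hr6 : r ≠ 6) (hr10 : r ≠ 10) :
    ∃ m : ℕ, Nat.Coprime m r ∧ r < 3 * m ∧ 2 * m < r := by
  rcases Nat.even_or_odd r with he | ho
  · obtain ⟨u, hu⟩ := he
    rcases Nat.even_or_odd u with hue | huo
    · obtain ⟨w, hw⟩ := hue
      refine ⟨u - 1, ?_, by omega, by omega⟩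
      have h1 := Nat.gcd_dvd_left (u - 1) r
      have h2 := Nat.gcd_dvd_right (u - 1) r
      set d := Nat.gcd (u - 1) r with hd
      have h3 : d ∣ 2 := by
        have h4 := Nat.dvd_sub h2 (h1.mul_left 2)
        rwa [show r - 2 * (u - 1) = 2 by omega] at h4
      have hle : d ≤ 2 := Nat.le_of_dvd (by norm_num) h3
      interval_cases d
      · omega
      · exact hd.symm
      · obtain ⟨c, hc⟩ := h1
        omega
    · obtain ⟨w, hw⟩ := huo
      refine ⟨u - 2, ?_, by omega, by omega⟩
      have h1 := Nat.gcd_dvd_left (u - 2) r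
      have h2 := Nat.gcd_dvd_right (u - 2) r
      set d := Nat.gcd (u - 2) r with hd
      have h3 : d ∣ 4 := by
        have h4 := Nat.dvd_sub h2 (h1.mul_left 2)
        rwa [show r - 2 * (u - 2) = 4 by omega] at h4
      have hle : d ≤ 4 := Nat.le_of_dvd (by norm_num) h3
      interval_cases d
      · omega
      · exact hd.symm
      · obtain ⟨c, hc⟩ := h1
        omega
      · exact absurd h3 (by norm_num)
      · obtain ⟨c, hc⟩ := h1
        omega
  · obtain ⟨m, hm⟩ := ho
    refine ⟨m, ?_, by omega, by omega⟩
    have h1 := Nat.gcd_dvd_left m r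
    have h2 := Nat.gcd_dvd_right m r
    have h3 : Nat.gcd m r ∣ 1 := by
      have h4 := Nat.dvd_sub h2 (h1.mul_left 2)
      rwa [show r - 2 * m = 1 by omega] at h4
    exact Nat.dvd_one.mp h3

/-- exp(iα) + exp(iα)⁻¹ = 2 cos α. -/
lemma aux_cos (α : ℝ) : Complex.exp (↑α * Complex.I) +
    (Complex.exp (↑α * Complex.I))⁻¹ = ((2 * Real.cos α : ℝ) : ℂ) := by
  rw [← Complex.exp_neg, ← neg_mul]
  rw [Complex.exp_mul_I, Complex.exp_mul_I]
  push_cast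
  rw [Complex.cos_neg, Complex.sin_neg]
  ring

/-- For every r ≥ 5 with r ≠ 6 and r ≠ 10, there is a v with q = v² a primitive
r-th root of unity such that P₂(v) has infinite order in PGL₂(ℂ). -/
theorem stmt_8 (r : ℕ) (hr : 5 ≤ r) (hr6 : r ≠ 6) (hr10 : r ≠ 10) :
    ∃ v : ℂ, v ≠ 0 ∧ IsPrimitiveRoot (v ^ 2) r ∧ v + v⁻¹ ≠ 0 ∧
      ∀ k : ℕ, 1 ≤ k → ∀ c : ℂ,
        Ptwo v ^ k ≠ c • (1 : Matrix (Fin 2) (Fin 2) ℂ) := by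
  obtain ⟨m, hco, h3m, h2m⟩ := aux_exists_m r hr hr6 hr10
  have hr0 : r ≠ 0 := by omega
  have hrpos : (0:ℝ) < r := by
    have : 0 < r := by omega
    exact_mod_cast this
  have hpi := Real.pi_pos
  set β : ℝ := (m:ℝ)/(r:ℝ) with hβ
  have hβ1 : 1/3 < β := by
    rw [hβ, lt_div_iff₀ hrpos]
    have : (r:ℝ) < 3*(m:ℝ) := by exact_mod_cast h3m
    linarith
  have hβ2 : β < 1/2 := by
    rw [hβ, div_lt_iff₀ hrpos]
    have : 2*(m:ℝ) < (r:ℝ) := by exact_mod_cast h2m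
    linarith
  set α : ℝ := Real.pi * β with hα
  set v : ℂ := Complex.exp (↑α * Complex.I) with hv
  have hvne : v ≠ 0 := Complex.exp_ne_zero _
  have hv2 : v ^ 2 = Complex.exp (↑(2*α) * Complex.I) := by
    rw [hv, sq, ← Complex.exp_add]
    congr 1
    push_cast
    ring
  have hprim : IsPrimitiveRoot (v ^ 2) r := by
    have hp := Complex.isPrimitiveRoot_exp_of_coprime m r hr0 hco
    have he : v ^ 2 = Complex.exp (2 * ↑Real.pi * Complex.I * (↑m / ↑r)) := by
      rw [hv2, hα, hβ]
      congr 1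
      push_cast
      ring
    rwa [he]
  have hsum : v + v⁻¹ = ((2 * Real.cos α : ℝ) : ℂ) := by
    rw [hv]; exact aux_cos α
  have hcosα : 0 < Real.cos α := by
    apply Real.cos_pos_of_mem_Ioo
    constructor
    · rw [hα]; nlinarith
    · rw [hα]; nlinarith
  have hq2 : v + v⁻¹ ≠ 0 := by
    rw [hsum]
    exact Complex.ofReal_ne_zero.mpr (ne_of_gt (by positivity))
  have hq2' : qtwo v ≠ 0 := hq2
  have hsum2 : v ^ 2 + (v ^ 2)⁻¹ = ((2 * Real.cos (2*α) : ℝ) : ℂ) := by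
    rw [hv2]; exact aux_cos (2*α)
  have hcos2 : Real.cos (2*α) < -(1/2) := by
    have h1 : 2*Real.pi/3 < 2*α := by rw [hα]; nlinarith
    have h2 : 2*α ≤ Real.pi := by rw [hα]; nlinarith
    have h3 := Real.cos_lt_cos_of_nonneg_of_le_pi (by positivity) h2 h1
    have h4 : Real.cos (2*Real.pi/3) = -(1/2) := by
      rw [show (2*Real.pi/3 : ℝ) = Real.pi - Real.pi/3 by ring,
        Real.cos_pi_sub, Real.cos_pi_div_three]
    linarith
  set X : ℝ := 2 * Real.cos (2*α) with hX
  have hXlt : X < -1 := by rw [hX]; linarith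
  set t : ℝ := X * (X - 1) with ht
  have httwo : 2 < t := by rw [ht]; nlinarith
  have htr : (Ptwo v).trace = (t : ℂ) := by
    rw [aux_trace v hvne hq2', hsum2, ht, hX]
    push_cast
    ring
  have hdet : (Ptwo v).det = 1 := aux_det v hvne hq2'
  exact ⟨v, hvne, hprim, hq2, aux_key_s8 (Ptwo v) hdet t htr httwo⟩
end

section
/- Let v be a nonzero complex number with v^2 ≠ 1, let a be a natural number, and assume [2]_v ≠ 0 and [a+2]_v ≠ 0, where [n]_v = (v^n - v^{-n})/(v - v^{-1}). Then the matrix X_a(v) = [[-1/[2]_v, [a+3]_v/([2]_v [a+2]_v)], [1, [a+1]_v/[a+2]_v]] satisfies X_a(v) · [[-[a+1]_v/[a+2]_v, [a+3]_v/([2]_v [a+2]_v)], [1, 1/[2]_v]] = I, and det X_a(v) = -1. -/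
/-- The quantum integer [n]_v = (vⁿ - v⁻ⁿ)/(v - v⁻¹). -/
noncomputable def qint (v : ℂ) (n : ℕ) : ℂ := (v ^ n - v⁻¹ ^ n) / (v - v⁻¹)

/-- The change of coordinates block X_a(v) from the basis B_T to the basis B_Y. -/
noncomputable def Xmat (v : ℂ) (a : ℕ) : Matrix (Fin 2) (Fin 2) ℂ :=
  !![-1 / qint v 2, qint v (a + 3) / (qint v 2 * qint v (a + 2));
     1, qint v (a + 1) / qint v (a + 2)]

lemma qint_key (v : ℂ) (hv : v ≠ 0) (hv2 : v ^ 2 ≠ 1) (a : ℕ) :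
    qint v (a + 1) + qint v (a + 3) = qint v 2 * qint v (a + 2) := by
  have hd : v - v⁻¹ ≠ 0 := by
    intro h
    apply hv2
    have h' := sub_eq_zero.mp h
    field_simp at h'
    simpa [sq, eq_comm] using h'
  set w := v⁻¹ with hwdef
  have hw : v * w = 1 := by
    rw [hwdef]; field_simp
  have hmain : (qint v (a + 1) + qint v (a + 3)) * (v - w) ^ 2 =
      qint v 2 * qint v (a + 2) * (v - w) ^ 2 := by
    have e1 : qint v (a + 1) * (v - w) = v ^ (a + 1) - w ^ (a + 1) :=
      div_mul_cancel₀ _ hd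
    have e2 : qint v (a + 2) * (v - w) = v ^ (a + 2) - w ^ (a + 2) :=
      div_mul_cancel₀ _ hd
    have e3 : qint v (a + 3) * (v - w) = v ^ (a + 3) - w ^ (a + 3) :=
      div_mul_cancel₀ _ hd
    have e4 : qint v 2 * (v - w) = v ^ 2 - w ^ 2 :=
      div_mul_cancel₀ _ hd
    calc (qint v (a + 1) + qint v (a + 3)) * (v - w) ^ 2
        = ((v ^ (a + 1) - w ^ (a + 1)) + (v ^ (a + 3) - w ^ (a + 3))) * (v - w) := by
          rw [← e1, ← e3]; ring
      _ = (v ^ 2 - w ^ 2) * (v ^ (a + 2) - w ^ (a + 2)) := by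
          linear_combination (-(v - w) * (v ^ (a + 1) - w ^ (a + 1))) * hw
      _ = qint v 2 * qint v (a + 2) * (v - w) ^ 2 := by
          rw [← e4, ← e2]; ring
  have hdd : (v - w) ^ 2 ≠ 0 := pow_ne_zero _ hd
  exact mul_right_cancel₀ hdd hmain

/-- X_a(v) times the paper's formula for X(a)⁻¹ is the identity, and
det X_a(v) = -1. -/
theorem stmt_9 (v : ℂ) (hv : v ≠ 0) (hv2 : v ^ 2 ≠ 1) (a : ℕ)
    (h2 : qint v 2 ≠ 0) (ha2 : qint v (a + 2) ≠ 0) :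
    Xmat v a *
      !![-qint v (a + 1) / qint v (a + 2),
         qint v (a + 3) / (qint v 2 * qint v (a + 2));
         1, 1 / qint v 2] = 1 ∧
    (Xmat v a).det = -1 := by
  have key := qint_key v hv hv2 a
  set A := qint v (a + 1) with hA
  set B := qint v (a + 2) with hB
  set C := qint v (a + 3) with hC
  set Q := qint v 2 with hQ
  clear_value A B C Q
  constructor
  · ext i j
    fin_cases i <;> fin_cases j <;>
      simp [Xmat, Matrix.mul_apply, Fin.sum_univ_two, ← hA, ← hB, ← hC, ← hQ] <;>
      field_simp <;>
      first
        | linear_combination (1 - Q) * key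
        | linear_combination (-Q) * key
        | linear_combination (Q * (B - 1)) * key
        | linear_combination (B - 1) * key
        | linear_combination Q * key
        | linear_combination key
        | linear_combination B * Q * key
        | linear_combination (Q - 1) * key
        | ring
  · simp [Xmat, Matrix.det_fin_two, ← hA, ← hB, ← hC, ← hQ]
    field_simp
    linear_combination (-1) * key
end

section
/- Let v be a nonzero complex number with v^2 ≠ 1, let a be a natural number, and assume [2]_v ≠ 0 and [a+2]_v ≠ 0; set q = v^2 and let M_a(v) be the 2×2 matrix with entries (M_a)_{11} = 1-(1-q^{a+2})[a+1]_v[a+3]_v/[a+2]_v^2, (M_a)_{12} = (1-q^{a+2})(-v[a+1]_v+v^{-1}[a+3]_v)[a+1]_v[a+3]_v/([2]_v[a+2]_v^3), (M_a)_{21} = (1-q^{-(a+2)})(v^{-1}[a+1]_v-v[a+3]_v)/([2]_v[a+2]_v), (M_a)_{22} = 1-(1-q^{-(a+2)})[a+1]_v[a+3]_v/[a+2]_v^2. Then tr M_a(v) = 2 + (v^{a+1} - v^{-(a+1)})(v^{a+3} - v^{-(a+3)}). -/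
set_option maxHeartbeats 1000000


/-- The 2×2 block M_a(v) of ρ_T((σ₁…σ_{n-1})ⁿ σ_n (σ₁…σ_{n-1})⁻ⁿ σ_n⁻¹). -/
noncomputable def Mmat (v : ℂ) (a : ℕ) : Matrix (Fin 2) (Fin 2) ℂ :=
  !![1 - (1 - (v ^ 2) ^ (a + 2)) * qint v (a + 1) * qint v (a + 3) /
        (qint v (a + 2)) ^ 2,
     (1 - (v ^ 2) ^ (a + 2)) * (-v * qint v (a + 1) + v⁻¹ * qint v (a + 3)) *
        qint v (a + 1) * qint v (a + 3) / (qint v 2 * (qint v (a + 2)) ^ 3);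
     (1 - ((v ^ 2) ^ (a + 2))⁻¹) * (v⁻¹ * qint v (a + 1) - v * qint v (a + 3)) /
        (qint v 2 * qint v (a + 2)),
     1 - (1 - ((v ^ 2) ^ (a + 2))⁻¹) * qint v (a + 1) * qint v (a + 3) /
        (qint v (a + 2)) ^ 2]

/-- tr M_a(v) = 2 + (v^{a+1} - v^{-(a+1)})(v^{a+3} - v^{-(a+3)}). -/
theorem stmt_11 (v : ℂ) (hv : v ≠ 0) (hv2 : v ^ 2 ≠ 1) (a : ℕ)
    (h2 : qint v 2 ≠ 0) (ha2 : qint v (a + 2) ≠ 0) :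
    (Mmat v a).trace =
      2 + (v ^ (a + 1) - v⁻¹ ^ (a + 1)) * (v ^ (a + 3) - v⁻¹ ^ (a + 3)) := by
  have hd : v - v⁻¹ ≠ 0 := by
    intro h
    apply hv2
    rw [sub_eq_zero] at h
    rw [sq]; nth_rewrite 2 [h]; exact mul_inv_cancel₀ hv
  have hS : v ^ (a + 2) - v⁻¹ ^ (a + 2) ≠ 0 := by
    intro h
    apply ha2
    unfold qint
    rw [h, zero_div]
  set P := v ^ (a + 1) - v⁻¹ ^ (a + 1) with hP
  set R := v ^ (a + 3) - v⁻¹ ^ (a + 3) with hR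
  set S := v ^ (a + 2) - v⁻¹ ^ (a + 2) with hSdef
  have key : qint v (a + 1) * qint v (a + 3) / (qint v (a + 2)) ^ 2
      = P * R / S ^ 2 := by
    unfold qint
    rw [div_pow, div_mul_div_comm, ← sq, div_div_div_cancel_right₀ (pow_ne_zero 2 hd)]
  have hm : v ^ (a + 2) * v⁻¹ ^ (a + 2) = 1 := by
    rw [← mul_pow, mul_inv_cancel₀ hv, one_pow]
  have hQ : (v ^ 2) ^ (a + 2) = (v ^ (a + 2)) ^ 2 := by
    rw [← pow_mul, ← pow_mul, Nat.mul_comm]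
  have hQi : ((v ^ 2) ^ (a + 2))⁻¹ = (v⁻¹ ^ (a + 2)) ^ 2 := by
    rw [hQ, ← inv_pow, ← inv_pow]
  have hsum : (1 - (v ^ 2) ^ (a + 2)) + (1 - ((v ^ 2) ^ (a + 2))⁻¹) = -S ^ 2 := by
    rw [hQi, hQ, hSdef]
    linear_combination -2 * hm
  have trace_eq : (Mmat v a).trace
      = 2 - ((1 - (v ^ 2) ^ (a + 2)) + (1 - ((v ^ 2) ^ (a + 2))⁻¹))
          * (qint v (a + 1) * qint v (a + 3) / (qint v (a + 2)) ^ 2) := by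
    rw [Mmat, Matrix.trace_fin_two_of]
    ring
  rw [trace_eq, hsum, key]
  have : S ^ 2 * (P * R / S ^ 2) = P * R := by
    field_simp
  rw [neg_mul, sub_neg_eq_add, this]
end

section
/- Let θ be a real number, set v = exp(iθ/2) and q = v^2 = exp(iθ), let a be a natural number, and assume sin(θ/2) ≠ 0, cos(θ/2) ≠ 0, and sin((a+2)θ/2) ≠ 0. Then the matrix M_a(v) (with entries (M_a)_{11} = 1-(1-q^{a+2})[a+1]_v[a+3]_v/[a+2]_v^2, (M_a)_{12} = (1-q^{a+2})(-v[a+1]_v+v^{-1}[a+3]_v)[a+1]_v[a+3]_v/([2]_v[a+2]_v^3), (M_a)_{21} = (1-q^{-(a+2)})(v^{-1}[a+1]_v-v[a+3]_v)/([2]_v[a+2]_v), (M_a)_{22} = 1-(1-q^{-(a+2)})[a+1]_v[a+3]_v/[a+2]_v^2) equals [[1 + 2i·exp(i(a+2)θ/2)·S/sin((a+2)θ/2), -2i·sin(θ/2)·S/sin((a+2)θ/2)^2], [-2i·sin(θ/2), 1 - 2i·exp(-i(a+2)θ/2)·S/sin((a+2)θ/2)]], where S = sin((a+1)θ/2)·sin((a+3)θ/2).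 -/
open Complex Real

lemma exp_sub_exp (x : ℝ) :
    Complex.exp (Complex.I * x) - Complex.exp (-(Complex.I * x)) =
      2 * Complex.I * Real.sin x := by
  rw [show Complex.I * (x:ℂ) = (x:ℂ) * Complex.I by ring,
      show -((x:ℂ) * Complex.I) = ((-x : ℝ) : ℂ) * Complex.I by push_cast; ring]
  rw [Complex.exp_mul_I, Complex.exp_mul_I]
  simp [← Complex.ofReal_sin, ← Complex.ofReal_cos, Real.cos_neg, Real.sin_neg]
  ring

lemma exp_add_exp (x : ℝ) :
    Complex.exp (Complex.I * x) + Complex.exp (-(Complex.I * x)) =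
      2 * Real.cos x := by
  rw [show Complex.I * (x:ℂ) = (x:ℂ) * Complex.I by ring,
      show -((x:ℂ) * Complex.I) = ((-x : ℝ) : ℂ) * Complex.I by push_cast; ring]
  rw [Complex.exp_mul_I, Complex.exp_mul_I]
  simp [← Complex.ofReal_sin, ← Complex.ofReal_cos, Real.cos_neg, Real.sin_neg]
  ring

lemma Mmat_eq (a : ℕ) (v E s S s1 s3 : ℂ)
    (hv : v ≠ 0) (hE : E ≠ 0) (hs : s ≠ 0) (hS : S ≠ 0) (hvw : v + v⁻¹ ≠ 0)
    (P2 : v ^ (a + 2) = E)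
    (R1 : 2 * Complex.I * s1 = E * v⁻¹ - E⁻¹ * v)
    (R2 : 2 * Complex.I * s3 = E * v - E⁻¹ * v⁻¹)
    (R3 : 2 * Complex.I * S = E - E⁻¹)
    (R4 : 2 * Complex.I * s = v - v⁻¹) :
    Mmat v a = !![1 + 2 * Complex.I * E * (s1 * s3) / S,
                  -2 * Complex.I * s * (s1 * s3) / S ^ 2;
                  -2 * Complex.I * s,
                  1 - 2 * Complex.I * E⁻¹ * (s1 * s3) / S] := by
  have h2I : (2 : ℂ) * Complex.I ≠ 0 := by simp [Complex.I_ne_zero]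
  have hEF : E * E⁻¹ = 1 := mul_inv_cancel₀ hE
  have hvv : v * v⁻¹ = 1 := mul_inv_cancel₀ hv
  have hu' : v ^ (a + 1) = E * v⁻¹ := by
    rw [← P2, pow_succ]
    field_simp
    ring
  have hP3 : v ^ (a + 3) = E * v := by
    rw [show a + 3 = (a + 2) + 1 from rfl, pow_succ, P2]
  have hnum1 : v ^ (a + 1) - v⁻¹ ^ (a + 1) = 2 * Complex.I * s1 := by
    rw [inv_pow, hu', mul_inv, inv_inv, ← R1]
  have hnum3 : v ^ (a + 3) - v⁻¹ ^ (a + 3) = 2 * Complex.I * s3 := by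
    rw [inv_pow, hP3, mul_inv, ← R2]
  have hnum2 : v ^ (a + 2) - v⁻¹ ^ (a + 2) = 2 * Complex.I * S := by
    rw [inv_pow, P2, ← R3]
  have hvne : v - v⁻¹ ≠ 0 := by
    rw [← R4]; exact mul_ne_zero h2I hs
  have hq1 : qint v (a + 1) = s1 / s := by
    simp only [qint]; rw [hnum1, ← R4]; exact mul_div_mul_left s1 s h2I
  have hq2 : qint v (a + 2) = S / s := by
    simp only [qint]; rw [hnum2, ← R4]; exact mul_div_mul_left S s h2I
  have hq3 : qint v (a + 3) = s3 / s := by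
    simp only [qint]; rw [hnum3, ← R4]; exact mul_div_mul_left s3 s h2I
  have hqq : qint v 2 = v + v⁻¹ := by
    simp only [qint]; rw [div_eq_iff hvne]; ring
  have hqa : (v ^ 2) ^ (a + 2) = E ^ 2 := by
    rw [← P2, ← pow_mul, ← pow_mul, Nat.mul_comm]
  have hqa' : ((v ^ 2) ^ (a + 2))⁻¹ = (E⁻¹) ^ 2 := by
    rw [hqa, ← inv_pow]
  have keyE : 1 - E ^ 2 = -(2 * Complex.I * S) * E := by
    linear_combination E * R3 - hEF
  have keyF : 1 - (E⁻¹) ^ 2 = (2 * Complex.I * S) * E⁻¹ := by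
    linear_combination (-E⁻¹) * R3 - hEF
  have hnumA : v⁻¹ * s1 - v * s3 = -E * (v + v⁻¹) * s := by
    apply mul_left_cancel₀ h2I
    linear_combination v⁻¹ * R1 - v * R2 + E * (v + v⁻¹) * R4
  have hnumB : -v * s1 + v⁻¹ * s3 = E⁻¹ * (v + v⁻¹) * s := by
    apply mul_left_cancel₀ h2I
    linear_combination (-v) * R1 + v⁻¹ * R2 - E⁻¹ * (v + v⁻¹) * R4
  have hvv1 : v * v + 1 ≠ 0 := by
    have h := mul_ne_zero hv hvw
    rwa [mul_add, mul_inv_cancel₀ hv] at h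
  ext i j
  fin_cases i <;> fin_cases j <;>
    simp only [Mmat, Matrix.cons_val', Matrix.cons_val_zero, Matrix.cons_val_one,
      Matrix.head_cons, Matrix.empty_val', Matrix.cons_val_fin_one, Matrix.head_fin_const,
      Fin.mk_zero, Fin.mk_one, Matrix.of_apply, Fin.isValue]
  · rw [hqa, hq1, hq2, hq3, keyE]
    field_simp
    ring
  · rw [hqa, hq1, hq2, hq3, hqq, keyE]
    have : -v * (s1 / s) + v⁻¹ * (s3 / s) = (-v * s1 + v⁻¹ * s3) / s := by ring
    rw [this, hnumB, div_eq_div_iff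
      (mul_ne_zero hvw (pow_ne_zero _ (div_ne_zero hS hs))) (pow_ne_zero _ hS)]
    field_simp
  · rw [hqa', hq1, hq2, hq3, hqq, keyF]
    have : v⁻¹ * (s1 / s) - v * (s3 / s) = (v⁻¹ * s1 - v * s3) / s := by ring
    rw [this, hnumA]
    field_simp [hvw]
    have h1 : (1 + v ^ 2) ≠ 0 := by rw [add_comm, sq]; exact hvv1
    linear_combination (-1 : ℂ) * (mul_inv_cancel₀ h1)
  · rw [hqa', hq1, hq2, hq3, keyF]
    field_simp

/-- The trigonometric form of M_a(v) for v = exp(iθ/2). -/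
theorem stmt_12 (θ : ℝ) (a : ℕ)
    (hs : Real.sin (θ / 2) ≠ 0) (hc : Real.cos (θ / 2) ≠ 0)
    (ha : Real.sin (((a : ℝ) + 2) * θ / 2) ≠ 0) :
    Mmat (Complex.exp (Complex.I * θ / 2)) a =
      !![1 + 2 * Complex.I * Complex.exp (Complex.I * (((a : ℝ) + 2) * θ / 2)) *
            ((Real.sin (((a : ℝ) + 1) * θ / 2) * Real.sin (((a : ℝ) + 3) * θ / 2) : ℝ) : ℂ) /
            ((Real.sin (((a : ℝ) + 2) * θ / 2) : ℝ) : ℂ),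
         -2 * Complex.I * ((Real.sin (θ / 2) : ℝ) : ℂ) *
            ((Real.sin (((a : ℝ) + 1) * θ / 2) * Real.sin (((a : ℝ) + 3) * θ / 2) : ℝ) : ℂ) /
            ((Real.sin (((a : ℝ) + 2) * θ / 2) : ℝ) : ℂ) ^ 2;
         -2 * Complex.I * ((Real.sin (θ / 2) : ℝ) : ℂ),
         1 - 2 * Complex.I * Complex.exp (-Complex.I * (((a : ℝ) + 2) * θ / 2)) *
            ((Real.sin (((a : ℝ) + 1) * θ / 2) * Real.sin (((a : ℝ) + 3) * θ / 2) : ℝ) : ℂ) /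
            ((Real.sin (((a : ℝ) + 2) * θ / 2) : ℝ) : ℂ)] := by
  set v : ℂ := Complex.exp (Complex.I * θ / 2) with hvdef
  set E : ℂ := Complex.exp (Complex.I * ((((a : ℝ) : ℂ) + 2) * (θ : ℂ) / 2)) with hEdef
  have hE1 : E = Complex.exp (Complex.I * ((((a : ℝ) + 2) * θ / 2 : ℝ) : ℂ)) := by
    rw [hEdef]; congr 1; push_cast; ring
  have hv : v ≠ 0 := Complex.exp_ne_zero _
  have hE : E ≠ 0 := Complex.exp_ne_zero _
  have hvinv : v⁻¹ = Complex.exp (-(Complex.I * θ / 2)) := by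
    rw [hvdef, ← Complex.exp_neg]
  have hEinv : E⁻¹ = Complex.exp (-(Complex.I * ((((a : ℝ) + 2) * θ / 2 : ℝ) : ℂ))) := by
    rw [hE1, ← Complex.exp_neg]
  have hP2 : v ^ (a + 2) = E := by
    rw [hvdef, hE1, ← Complex.exp_nat_mul]
    congr 1
    push_cast
    ring
  have R4 : 2 * Complex.I * ((Real.sin (θ / 2) : ℝ) : ℂ) = v - v⁻¹ := by
    rw [hvinv, hvdef,
      show Complex.I * (θ : ℂ) / 2 = Complex.I * ((θ / 2 : ℝ) : ℂ) by push_cast; ring]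
    exact (exp_sub_exp (θ / 2)).symm
  have R3 : 2 * Complex.I * ((Real.sin (((a : ℝ) + 2) * θ / 2) : ℝ) : ℂ) = E - E⁻¹ := by
    rw [hEinv, hE1]
    exact (exp_sub_exp _).symm
  have R1 : 2 * Complex.I * ((Real.sin (((a : ℝ) + 1) * θ / 2) : ℝ) : ℂ) = E * v⁻¹ - E⁻¹ * v := by
    rw [hvinv, hEinv, hvdef, hE1, ← Complex.exp_add, ← Complex.exp_add,
      show Complex.I * ((((a : ℝ) + 2) * θ / 2 : ℝ) : ℂ) + -(Complex.I * (θ : ℂ) / 2) =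
        Complex.I * ((((a : ℝ) + 1) * θ / 2 : ℝ) : ℂ) by push_cast; ring,
      show -(Complex.I * ((((a : ℝ) + 2) * θ / 2 : ℝ) : ℂ)) + Complex.I * (θ : ℂ) / 2 =
        -(Complex.I * ((((a : ℝ) + 1) * θ / 2 : ℝ) : ℂ)) by push_cast; ring]
    exact (exp_sub_exp _).symm
  have R2 : 2 * Complex.I * ((Real.sin (((a : ℝ) + 3) * θ / 2) : ℝ) : ℂ) = E * v - E⁻¹ * v⁻¹ := by
    rw [hvinv, hEinv, hvdef, hE1, ← Complex.exp_add, ← Complex.exp_add,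
      show Complex.I * ((((a : ℝ) + 2) * θ / 2 : ℝ) : ℂ) + Complex.I * (θ : ℂ) / 2 =
        Complex.I * ((((a : ℝ) + 3) * θ / 2 : ℝ) : ℂ) by push_cast; ring,
      show -(Complex.I * ((((a : ℝ) + 2) * θ / 2 : ℝ) : ℂ)) + -(Complex.I * (θ : ℂ) / 2) =
        -(Complex.I * ((((a : ℝ) + 3) * θ / 2 : ℝ) : ℂ)) by push_cast; ring]
    exact (exp_sub_exp _).symm
  have hvw : v + v⁻¹ ≠ 0 := by
    rw [hvinv, hvdef,
      show Complex.I * (θ : ℂ) / 2 = Complex.I * ((θ / 2 : ℝ) : ℂ) by push_cast; ring,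
      exp_add_exp (θ / 2)]
    exact mul_ne_zero two_ne_zero (Complex.ofReal_ne_zero.mpr hc)
  have hsc : ((Real.sin (θ / 2) : ℝ) : ℂ) ≠ 0 := Complex.ofReal_ne_zero.mpr hs
  have hSc : ((Real.sin (((a : ℝ) + 2) * θ / 2) : ℝ) : ℂ) ≠ 0 := Complex.ofReal_ne_zero.mpr ha
  have hExp' : Complex.exp (-Complex.I * ((((a : ℝ) : ℂ) + 2) * (θ : ℂ) / 2)) = E⁻¹ := by
    rw [hEinv]; congr 1; push_cast; ring
  rw [Mmat_eq a v E _ _ _ _ hv hE hsc hSc hvw hP2 R1 R2 R3 R4, hExp', Complex.ofReal_mul]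
end

section
/- For every integer r ≥ 5 with r ≠ 6, there exists a nonzero complex number v such that q = v^2 is a primitive r-th root of unity, [2]_v ≠ 0, [3]_v ≠ 0, and the matrix M_1(v) (the 2×2 matrix with entries (M_1)_{11} = 1-(1-q^{3})[2]_v[4]_v/[3]_v^2, (M_1)_{12} = (1-q^{3})(-v[2]_v+v^{-1}[4]_v)[2]_v[4]_v/([2]_v[3]_v^3), (M_1)_{21} = (1-q^{-3})(v^{-1}[2]_v-v[4]_v)/([2]_v[3]_v), (M_1)_{22} = 1-(1-q^{-3})[2]_v[4]_v/[3]_v^2) has infinite order in PGL_2(ℂ), i.e. for every integer k ≥ 1 and every complex number c, M_1(v)^k ≠ c·I. -/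
open Real

lemma keyNat (r : ℕ) (hr : 5 ≤ r) (hr6 : r ≠ 6) :
    ∃ k, 1 ≤ k ∧ 2*k < r ∧ r < 4*k ∧ Nat.Coprime k r := by
  rcases Nat.even_or_odd r with he | ho
  · obtain ⟨m, hm⟩ := he
    rcases Nat.even_or_odd m with hme | hmo
    · obtain ⟨j, hj⟩ := hme
      refine ⟨2*j - 1, by omega, by omega, by omega, ?_⟩
      have h2 : Nat.Coprime (2*j-1) 2 := Nat.coprime_two_right.mpr ⟨j-1, by omega⟩
      have h4 := (Nat.coprime_add_mul_left_right (2*j-1) 2 2).mpr h2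
      rwa [show 2 + (2*j-1)*2 = r by omega] at h4
    · obtain ⟨l, hl⟩ := hmo
      refine ⟨m - 2, by omega, by omega, by omega, ?_⟩
      have h2 : Nat.Coprime (m-2) 2 := Nat.coprime_two_right.mpr ⟨l-1, by omega⟩
      have h4 : Nat.Coprime (m-2) 4 := by
        have := Nat.Coprime.pow_right 2 h2
        norm_num at this; exact this
      have h5 := (Nat.coprime_add_mul_left_right (m-2) 4 2).mpr h4
      rwa [show 4 + (m-2)*2 = r by omega] at h5
  · obtain ⟨l, hl⟩ := ho
    refine ⟨(r-1)/2, by omega, by omega, by omega, ?_⟩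
    have h1 := (Nat.coprime_add_mul_left_right ((r-1)/2) 1 2).mpr (Nat.coprime_one_right _)
    rwa [show 1 + (r-1)/2*2 = r by omega] at h1

lemma cayley' (A : Matrix (Fin 2) (Fin 2) ℂ) :
    A * A = A.trace • A - A.det • 1 := by
  ext i j
  fin_cases i <;> fin_cases j <;>
    simp [Matrix.mul_apply, Fin.sum_univ_two, Matrix.trace_fin_two,
      Matrix.det_fin_two, Matrix.one_apply] <;> ring

noncomputable def seqC (t : ℝ) : ℕ → ℝ
  | 0 => 0
  | 1 => 1
  | (n+2) => t * seqC t (n+1) - seqC t n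

lemma seqC_pos (t : ℝ) (ht : 2 < t) : ∀ n, seqC t n < seqC t (n+1) ∧ 0 < seqC t (n+1) := by
  intro n
  induction n with
  | zero => simp [seqC]
  | succ n ih =>
    have h : seqC t (n+2) = t * seqC t (n+1) - seqC t n := rfl
    constructor <;> nlinarith [ih.1, ih.2]

lemma keyMat (M : Matrix (Fin 2) (Fin 2) ℂ) (t : ℝ) (ht : 2 < t)
    (hM : M * M = (t:ℂ) • M - 1) (h10 : M 1 0 ≠ 0) :
    ∀ k : ℕ, 1 ≤ k → ∀ c : ℂ, M ^ k ≠ c • (1 : Matrix (Fin 2) (Fin 2) ℂ) := by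
  have hpow : ∀ n : ℕ, M ^ (n+1) = (seqC t (n+1) : ℂ) • M - (seqC t n : ℂ) • 1 := by
    intro n
    induction n with
    | zero => simp [seqC]
    | succ n ih =>
      rw [pow_succ, ih, sub_mul, smul_mul_assoc, smul_mul_assoc, one_mul, hM]
      have h : seqC t (n+2) = t * seqC t (n+1) - seqC t n := rfl
      rw [h]
      push_cast
      rw [smul_sub, smul_smul]
      module
  intro k hk c hEq
  obtain ⟨n, rfl⟩ : ∃ n, k = n + 1 := ⟨k - 1, by omega⟩
  have h := congrFun (congrFun hEq 1) 0
  rw [hpow n] at h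
  simp [Matrix.sub_apply, Matrix.smul_apply, Matrix.one_apply, smul_eq_mul] at h
  rcases h with h' | h'
  · exact absurd (by exact_mod_cast h' : seqC t (n+1) = 0) (ne_of_gt (seqC_pos t ht n).2)
  · exact h10 h'

section TrigLemmas
variable (θ : ℝ)

lemma vpow (n : ℕ) : (Complex.exp (θ * Complex.I)) ^ n
    = Complex.cos (n*θ) + Complex.sin (n*θ) * Complex.I := by
  rw [← Complex.exp_nat_mul, show (n:ℂ) * (θ * Complex.I) = ((n*θ : ℝ):ℂ) * Complex.I by push_cast; ring,
    Complex.exp_mul_I]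
  push_cast
  ring

lemma vipow (n : ℕ) : ((Complex.exp (θ * Complex.I))⁻¹) ^ n
    = Complex.cos (n*θ) - Complex.sin (n*θ) * Complex.I := by
  rw [← Complex.exp_neg, ← Complex.exp_nat_mul,
    show (n:ℂ) * (-(θ * Complex.I)) = ((-(n*θ) : ℝ):ℂ) * Complex.I by push_cast; ring,
    Complex.exp_mul_I]
  push_cast
  rw [Complex.cos_neg, Complex.sin_neg]
  ring

lemma vsub (n : ℕ) : (Complex.exp (θ * Complex.I)) ^ n - ((Complex.exp (θ * Complex.I))⁻¹) ^ n
    = 2 * (Real.sin (n*θ) : ℂ) * Complex.I := by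
  rw [vpow, vipow]
  push_cast
  ring

lemma vadd' (n : ℕ) : (Complex.exp (θ * Complex.I)) ^ n + ((Complex.exp (θ * Complex.I))⁻¹) ^ n
    = 2 * (Real.cos (n*θ) : ℂ) := by
  rw [vpow, vipow]
  push_cast
  ring

end TrigLemmas

section AlgebraicLemmas
variable (v : ℂ) (hv : v ≠ 0) (h1 : v - v⁻¹ ≠ 0)
  (hS : v^2 + 1 ≠ 0) (hP : v^4 + v^2 + 1 ≠ 0)

include hv h1

lemma hq2 : qint v 2 = (v^2 + 1) / v := by
  rw [qint, div_eq_div_iff h1 hv]; field_simp; ring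

lemma hq3 : qint v 3 = (v^4 + v^2 + 1) / v^2 := by
  rw [qint, div_eq_div_iff h1 (pow_ne_zero 2 hv)]; field_simp; ring

lemma hq4 : qint v 4 = (v^2 + 1) * (v^4 + 1) / v^3 := by
  rw [qint, div_eq_div_iff h1 (pow_ne_zero 3 hv)]; field_simp; ring

include hS hP

set_option maxHeartbeats 1000000 in
lemma hMval : Mmat v 1 =
    !![1 - (1-v^6)*(v^2+1)^2*(v^4+1) / (v^4+v^2+1)^2,
       (1-v^6)*(v^2+1)^2*(v^4+1) / (v*(v^4+v^2+1)^3);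
       (1-v^6) / (v*(v^4+v^2+1)),
       1 - (v^6-1)*(v^2+1)^2*(v^4+1) / (v^6*(v^4+v^2+1)^2)] := by
  have e2 := hq2 v hv h1
  have e3 := hq3 v hv h1
  have e4 := hq4 v hv h1
  have hB1 : -v*((v^2+1)/v) + v⁻¹*((v^2+1)*(v^4+1)/v^3) = (v^2+1)/v^4 := by
    field_simp; ring
  have hC1 : v⁻¹*((v^2+1)/v) - v*((v^2+1)*(v^4+1)/v^3) = -(v^2+1)*v^2 := by
    field_simp; ring
  have eA : (1 - (v^2)^3) * ((v^2+1)/v) * ((v^2+1)*(v^4+1)/v^3) /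
        ((v^4+v^2+1)/v^2)^2
      = (1-v^6)*(v^2+1)^2*(v^4+1) / (v^4+v^2+1)^2 := by
    rw [div_eq_div_iff (pow_ne_zero 2 (div_ne_zero hP (pow_ne_zero 2 hv)))
      (pow_ne_zero 2 hP)]
    field_simp
  have eD : (1 - ((v^2)^3)⁻¹) * ((v^2+1)/v) * ((v^2+1)*(v^4+1)/v^3) /
        ((v^4+v^2+1)/v^2)^2
      = (v^6-1)*(v^2+1)^2*(v^4+1) / (v^6*(v^4+v^2+1)^2) := by
    rw [div_eq_div_iff (pow_ne_zero 2 (div_ne_zero hP (pow_ne_zero 2 hv)))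
      (mul_ne_zero (pow_ne_zero 6 hv) (pow_ne_zero 2 hP))]
    field_simp
  have eB : (1 - (v^2)^3) * (-v*((v^2+1)/v) + v⁻¹*((v^2+1)*(v^4+1)/v^3)) *
        ((v^2+1)/v) * ((v^2+1)*(v^4+1)/v^3) /
        ((v^2+1)/v * ((v^4+v^2+1)/v^2)^3)
      = (1-v^6)*(v^2+1)^2*(v^4+1) / (v*(v^4+v^2+1)^3) := by
    rw [hB1, div_eq_div_iff (mul_ne_zero (div_ne_zero hS hv)
        (pow_ne_zero 3 (div_ne_zero hP (pow_ne_zero 2 hv))))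
      (mul_ne_zero hv (pow_ne_zero 3 hP))]
    field_simp
  have eC : (1 - ((v^2)^3)⁻¹) * (v⁻¹*((v^2+1)/v) - v*((v^2+1)*(v^4+1)/v^3)) /
        ((v^2+1)/v * ((v^4+v^2+1)/v^2))
      = (1-v^6) / (v*(v^4+v^2+1)) := by
    rw [hC1, div_eq_div_iff (mul_ne_zero (div_ne_zero hS hv)
        (div_ne_zero hP (pow_ne_zero 2 hv)))
      (mul_ne_zero hv hP)]
    field_simp; ring
  simp only [Mmat, show (1:ℕ)+1 = 2 from rfl,
    show (1:ℕ)+2 = 3 from rfl, show (1:ℕ)+3 = 4 from rfl, e2, e3, e4, eA, eB, eC, eD]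

set_option maxHeartbeats 1000000 in
lemma htraceM : (Mmat v 1).trace
    = (v^2 + (v^2)⁻¹)^3 - 4*(v^2 + (v^2)⁻¹) + 2 := by
  rw [hMval v hv h1 hS hP, Matrix.trace_fin_two_of]
  have hP' : v^2*(v^2+1)+1 ≠ 0 := by rw [show v^2*(v^2+1)+1 = v^4+v^2+1 by ring]; exact hP
  field_simp
  ring

set_option maxHeartbeats 1000000 in
lemma hdetM : (Mmat v 1).det = 1 := by
  have hp1 : (v^4+v^2+1)^2 ≠ 0 := pow_ne_zero 2 hP
  have hp2 : v^6*(v^4+v^2+1)^2 ≠ 0 := mul_ne_zero (pow_ne_zero 6 hv) hp1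
  have hp3 : v*(v^4+v^2+1)^3 ≠ 0 := mul_ne_zero hv (pow_ne_zero 3 hP)
  have hp4 : v*(v^4+v^2+1) ≠ 0 := mul_ne_zero hv hP
  rw [hMval v hv h1 hS hP, Matrix.det_fin_two_of, one_sub_div hp1, one_sub_div hp2,
    div_mul_div_comm, div_mul_div_comm,
    div_sub_div _ _ (mul_ne_zero hp1 hp2) (mul_ne_zero hp3 hp4),
    div_eq_one_iff_eq (mul_ne_zero (mul_ne_zero hp1 hp2) (mul_ne_zero hp3 hp4))]
  ring

lemma hCM : (Mmat v 1) 1 0 = (1-v^6) / (v*(v^4+v^2+1)) := by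
  rw [hMval v hv h1 hS hP]
  simp

end AlgebraicLemmas

set_option maxHeartbeats 1000000 in
/-- For every r ≥ 5 with r ≠ 6 there is a v with q = v² a primitive r-th root
of unity such that M₁(v) has infinite order in PGL₂(ℂ). -/
theorem stmt_14 (r : ℕ) (hr : 5 ≤ r) (hr6 : r ≠ 6) :
    ∃ v : ℂ, v ≠ 0 ∧ IsPrimitiveRoot (v ^ 2) r ∧
      qint v 2 ≠ 0 ∧ qint v 3 ≠ 0 ∧
      ∀ k : ℕ, 1 ≤ k → ∀ c : ℂ,
        Mmat v 1 ^ k ≠ c • (1 : Matrix (Fin 2) (Fin 2) ℂ) := by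
  obtain ⟨a, ha1, ha2, ha4, hco⟩ := keyNat r hr hr6
  have hπ := Real.pi_pos
  have hr0 : (0:ℝ) < r := by exact_mod_cast (by omega : 0 < r)
  set θ : ℝ := π * a / r with hθdef
  -- bounds on θ
  have hkr1 : (1:ℝ)/4 < (a:ℝ)/r := by
    rw [div_lt_div_iff₀ (by norm_num) hr0]
    exact_mod_cast (by omega : 1 * r < a * 4)
  have hkr2 : (a:ℝ)/r < 1/2 := by
    rw [div_lt_div_iff₀ hr0 (by norm_num)]
    exact_mod_cast (by omega : a * 2 < 1 * r)
  have hθeq : θ = π * ((a:ℝ)/r) := by rw [hθdef]; ring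
  have hθ1 : π/4 < θ := by
    rw [hθeq, show π/4 = π * (1/4) by ring]
    exact mul_lt_mul_of_pos_left hkr1 hπ
  have hθ2 : θ < π/2 := by
    rw [hθeq, show π/2 = π * (1/2) by ring]
    exact mul_lt_mul_of_pos_left hkr2 hπ
  -- 3a ≠ r
  have h3a : 3 * a ≠ r := by
    intro h
    have hd : a ∣ r := ⟨3, by omega⟩
    have := Nat.Coprime.eq_one_of_dvd hco hd
    omega
  -- trig facts
  have hs2 : Real.sin (2*θ) ≠ 0 := by
    intro h
    rw [Real.sin_eq_zero_iff] at h
    obtain ⟨n, hn⟩ := h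
    have h1 : (0:ℝ) < n := by nlinarith
    have h2 : (n:ℝ) < 1 := by nlinarith
    have h1' : (0:ℤ) < n := by exact_mod_cast h1
    have h2' : (n:ℤ) < 1 := by exact_mod_cast h2
    omega
  have hs3 : Real.sin (3*θ) ≠ 0 := by
    intro h
    rw [Real.sin_eq_zero_iff] at h
    obtain ⟨n, hn⟩ := h
    have h1 : (0:ℝ) < n := by nlinarith
    have h2 : (n:ℝ) < 2 := by nlinarith
    have h1' : (0:ℤ) < n := by exact_mod_cast h1
    have h2' : (n:ℤ) < 2 := by exact_mod_cast h2
    have hn1 : n = 1 := by omega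
    rw [hn1] at hn
    -- 1 * π = 3θ = 3πa/r  ⇒  3a = r
    have h3 : (3:ℝ) * a = r := by
      rw [hθdef] at hn
      have : π * r = π * (3 * a) := by
        field_simp at hn
        push_cast at hn
        rw [show (r:ℝ) = 3 * a by linarith]
      have := mul_left_cancel₀ (ne_of_gt hπ) this
      linarith
    have : (3 * a : ℕ) = r := by exact_mod_cast h3
    exact h3a this
  have hsθ : Real.sin θ ≠ 0 := by
    intro h
    apply hs2
    rw [Real.sin_two_mul, h]; ring
  have hcθ : Real.cos θ ≠ 0 := by
    intro h
    apply hs2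
    rw [Real.sin_two_mul, h]; ring
  have hc2neg : Real.cos (2*θ) < 0 :=
    Real.cos_neg_of_pi_div_two_lt_of_lt (by linarith) (by linarith)
  have hc2gt : -1 < Real.cos (2*θ) := by
    have hpy := Real.sin_sq_add_cos_sq (2*θ)
    have hpos : 0 < Real.sin (2*θ)^2 := by positivity
    nlinarith
  -- the complex number v
  set v : ℂ := Complex.exp (θ * Complex.I) with hvdef
  have hv : v ≠ 0 := Complex.exp_ne_zero _
  have hsub1 : v - v⁻¹ = 2 * (Real.sin θ : ℂ) * Complex.I := by
    have := vsub θ 1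
    simpa using this
  have h1 : v - v⁻¹ ≠ 0 := by
    rw [hsub1]
    exact mul_ne_zero (mul_ne_zero two_ne_zero (Complex.ofReal_ne_zero.mpr hsθ))
      Complex.I_ne_zero
  have hadd1 : v + v⁻¹ = 2 * (Real.cos θ : ℂ) := by
    have := vadd' θ 1
    simpa using this
  have hsub3 : v^3 - v⁻¹^3 = 2 * (Real.sin (3*θ) : ℂ) * Complex.I := by
    have := vsub θ 3
    push_cast at this
    convert this using 4 <;> push_cast <;> ring
  have h3ne : v^3 - v⁻¹^3 ≠ 0 := by
    rw [hsub3]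
    exact mul_ne_zero (mul_ne_zero two_ne_zero (Complex.ofReal_ne_zero.mpr hs3))
      Complex.I_ne_zero
  have hS : v^2 + 1 ≠ 0 := by
    have hfac : v^2 + 1 = v * (v + v⁻¹) := by field_simp
    rw [hfac, hadd1]
    exact mul_ne_zero hv (mul_ne_zero two_ne_zero (Complex.ofReal_ne_zero.mpr hcθ))
  have hP : v^4 + v^2 + 1 ≠ 0 := by
    have hfac : v^4 + v^2 + 1 = (v^3 - v⁻¹^3) * v^2 / (v - v⁻¹) := by
      rw [eq_div_iff h1]; field_simp; ring
    rw [hfac]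
    exact div_ne_zero (mul_ne_zero h3ne (pow_ne_zero 2 hv)) h1
  have hv6 : 1 - v^6 ≠ 0 := by
    have hfac : 1 - v^6 = -((v^3 - v⁻¹^3) * v^3) := by field_simp; ring
    rw [hfac]
    exact neg_ne_zero.mpr (mul_ne_zero h3ne (pow_ne_zero 3 hv))
  -- primitive root
  have hprim : IsPrimitiveRoot (v ^ 2) r := by
    have h := Complex.isPrimitiveRoot_exp_of_coprime a r (by omega) hco
    have hv2 : v ^ 2 = Complex.exp (2 * π * Complex.I * ((a:ℂ)/(r:ℂ))) := by
      rw [hvdef, ← Complex.exp_nat_mul]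
      congr 1
      rw [hθdef]
      have hrne : (r:ℂ) ≠ 0 := by exact_mod_cast (by omega : r ≠ 0)
      push_cast
      field_simp
    rw [hv2]
    exact h
  -- qint nonvanishing
  have hq2ne : qint v 2 ≠ 0 := by
    rw [hq2 v hv h1]; exact div_ne_zero hS hv
  have hq3ne : qint v 3 ≠ 0 := by
    rw [hq3 v hv h1]; exact div_ne_zero hP (pow_ne_zero 2 hv)
  -- trace value
  set x : ℝ := 2 * Real.cos (2*θ) with hxdef
  have hxv : v^2 + (v^2)⁻¹ = (x:ℂ) := by
    have h := vadd' θ 2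
    push_cast at h
    rw [← inv_pow, h, hxdef]
    push_cast
    ring
  set t : ℝ := x^3 - 4*x + 2 with htdef
  have ht2 : 2 < t := by
    have hx1 : -2 < x := by rw [hxdef]; linarith
    have hx2 : x < 0 := by rw [hxdef]; linarith
    rw [htdef]
    nlinarith [mul_pos (mul_pos (neg_pos.mpr hx2) (by linarith : (0:ℝ) < 2 - x))
      (by linarith : (0:ℝ) < x + 2)]
  -- the matrix relation
  have hMM : Mmat v 1 * Mmat v 1 = (t:ℂ) • Mmat v 1 - 1 := by
    have hcoef : ((x:ℂ))^3 - 4*(x:ℂ) + 2 = (t:ℂ) := by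
      rw [htdef]; push_cast; ring
    have hcay := cayley' (Mmat v 1)
    rw [htraceM v hv h1 hS hP, hdetM v hv h1 hS hP, hxv, hcoef, one_smul] at hcay
    exact hcay
  have h10 : Mmat v 1 1 0 ≠ 0 := by
    rw [hCM v hv h1 hS hP]
    exact div_ne_zero hv6 (mul_ne_zero hv hP)
  exact ⟨v, hv, hprim, hq2ne, hq3ne, keyMat (Mmat v 1) t ht2 hMM h10⟩
end

section
/- For every integer r ≥ 5 with r ≠ 6, there exist a ∈ {0, 2} and a nonzero complex number v such that q = v^2 is a primitive r-th root of unity, [2]_v ≠ 0, [a+2]_v ≠ 0, and the matrix M_a(v) (with entries (M_a)_{11} = 1-(1-q^{a+2})[a+1]_v[a+3]_v/[a+2]_v^2, (M_a)_{12} = (1-q^{a+2})(-v[a+1]_v+v^{-1}[a+3]_v)[a+1]_v[a+3]_v/([2]_v[a+2]_v^3), (M_a)_{21} = (1-q^{-(a+2)})(v^{-1}[a+1]_v-v[a+3]_v)/([2]_v[a+2]_v), (M_a)_{22} = 1-(1-q^{-(a+2)})[a+1]_v[a+3]_v/[a+2]_v^2) has infinite order in PGL_2(ℂ), i.e. for every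 integer k ≥ 1 and every complex number c, M_a(v)^k ≠ c·I. -/
set_option linter.unusedVariables false
set_option linter.unusedSectionVars false
set_option maxHeartbeats 1000000

section qlem
variable {v : ℂ}

lemma qint_one (hd : v - v⁻¹ ≠ 0) : qint v 1 = 1 := by
  unfold qint; rw [pow_one, pow_one, div_self hd]

lemma qint_two (hd : v - v⁻¹ ≠ 0) : qint v 2 = v + v⁻¹ := by
  unfold qint; rw [div_eq_iff hd]; ring

lemma qint_three (hv : v ≠ 0) (hd : v - v⁻¹ ≠ 0) : qint v 3 = v ^ 2 + 1 + v⁻¹ ^ 2 := by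
  have hw : v * v⁻¹ = 1 := mul_inv_cancel₀ hv
  unfold qint; rw [div_eq_iff hd]; linear_combination (v - v⁻¹) * hw

lemma qint_four (hd : v - v⁻¹ ≠ 0) : qint v 4 = (v + v⁻¹) * (v ^ 2 + v⁻¹ ^ 2) := by
  unfold qint; rw [div_eq_iff hd]; ring

lemma qint_five (hv : v ≠ 0) (hd : v - v⁻¹ ≠ 0) :
    qint v 5 = v ^ 4 + v ^ 2 + 1 + v⁻¹ ^ 2 + v⁻¹ ^ 4 := by
  have hw : v * v⁻¹ = 1 := mul_inv_cancel₀ hv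
  unfold qint; rw [div_eq_iff hd]
  linear_combination (v ^ 3 + v - v⁻¹ - v⁻¹ ^ 3) * hw

end qlem
lemma genDet (y B P R S T : ℂ) (hy : y ≠ 0) (hB : B ≠ 0)
    (key : P * R * y ^ 2 - S * T = (P + R) * B ^ 2 * y ^ 2) :
    (1 - P / B ^ 2) * (1 - R / B ^ 2) - S / (y * B ^ 3) * (T / (y * B)) = 1 := by
  have hB2 : (B ^ 2 : ℂ) ≠ 0 := pow_ne_zero 2 hB
  have hB4 : (B ^ 4 : ℂ) ≠ 0 := pow_ne_zero 4 hB
  have hD : (y ^ 2 * B ^ 4 : ℂ) ≠ 0 := mul_ne_zero (pow_ne_zero 2 hy) hB4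
  have h : (P + R) / B ^ 2 = (P * R * y ^ 2 - S * T) / (y ^ 2 * B ^ 4) := by
    rw [key, div_eq_div_iff hB2 hD]; ring
  have hPR : P * R / B ^ 4 = P * R * y ^ 2 / (y ^ 2 * B ^ 4) := by
    rw [div_eq_div_iff hB4 hD]; ring
  linear_combination hPR - h

lemma genE10 (y B T N : ℂ) (hy : y ≠ 0) (hB : B ≠ 0) (key : T = N * y) :
    T / (y * B) = N / B := by
  rw [key, mul_comm y B, mul_div_mul_right N B hy]

section A0
variable {v : ℂ} (hv : v ≠ 0) (hd : v - v⁻¹ ≠ 0) (h2 : qint v 2 ≠ 0)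
include hv hd h2

lemma tr0 : (Mmat v 0).trace = 2 - (4 - (v + v⁻¹) ^ 2) * ((v + v⁻¹) ^ 2 - 1) := by
  have key : (1 - (v ^ 2) ^ 2) * qint v 1 * qint v 3 +
      (1 - ((v ^ 2) ^ 2)⁻¹) * qint v 1 * qint v 3
      = ((4 - (v + v⁻¹) ^ 2) * ((v + v⁻¹) ^ 2 - 1)) * qint v 2 ^ 2 := by
    rw [qint_one hd, qint_two hd, qint_three hv hd]
    field_simp [hv]
    ring
  simp only [Mmat, Nat.reduceAdd]
  rw [Matrix.trace_fin_two_of]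
  calc 1 - (1 - (v ^ 2) ^ 2) * qint v 1 * qint v 3 / qint v 2 ^ 2 +
        (1 - (1 - ((v ^ 2) ^ 2)⁻¹) * qint v 1 * qint v 3 / qint v 2 ^ 2)
      = 2 - ((1 - (v ^ 2) ^ 2) * qint v 1 * qint v 3 +
          (1 - ((v ^ 2) ^ 2)⁻¹) * qint v 1 * qint v 3) / qint v 2 ^ 2 := by ring
    _ = 2 - (4 - (v + v⁻¹) ^ 2) * ((v + v⁻¹) ^ 2 - 1) := by
        rw [key, mul_div_cancel_right₀ _ (pow_ne_zero 2 h2)]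

lemma det0 : (Mmat v 0).det = 1 := by
  simp only [Mmat, Nat.reduceAdd]
  rw [Matrix.det_fin_two_of]
  refine genDet (qint v 2) (qint v 2) _ _ _ _ h2 h2 ?_
  have hvw : v * v⁻¹ = 1 := mul_inv_cancel₀ hv
  rw [qint_one hd, qint_two hd, qint_three hv hd]
  linear_combination ((2 * v⁻¹ ^ 4) + (2 * v⁻¹ ^ 6) + (-v⁻¹ ^ 8) + (-v⁻¹ ^ 10) + (-4 * v * v⁻¹) + (9 * v * v⁻¹ ^ 5) + (5 * v * v⁻¹ ^ 7) + (8 * v ^ 2 * v⁻¹ ^ 2) + (14 * v ^ 2 * v⁻¹ ^ 4) + (3 * v ^ 2 * v⁻¹ ^ 6) + (-2 * v ^ 2 * v⁻¹ ^ 8) + (14 * v ^ 3 * v⁻¹ ^ 3) + (15 * v ^ 3 * v⁻¹ ^ 5) + (5 * v ^ 3 * v⁻¹ ^ 7) + (v ^ 3 * v⁻¹ ^ 9) + (2 * v ^ 4) + (14 * v ^ 4 * v⁻¹ ^ 2) + (12 * v ^ 4 * v⁻¹ ^ 4) + (7 * v ^ 4 * v⁻¹ ^ 6) + (5 * v ^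 4 * v⁻¹ ^ 8) + (v ^ 4 * v⁻¹ ^ 10) + (9 * v ^ 5 * v⁻¹) + (15 * v ^ 5 * v⁻¹ ^ 3) + (10 * v ^ 5 * v⁻¹ ^ 5) + (3 * v ^ 5 * v⁻¹ ^ 7) + (2 * v ^ 6) + (3 * v ^ 6 * v⁻¹ ^ 2) + (7 * v ^ 6 * v⁻¹ ^ 4) + (10 * v ^ 6 * v⁻¹ ^ 6) + (3 * v ^ 6 * v⁻¹ ^ 8) + (5 * v ^ 7 * v⁻¹) + (5 * v ^ 7 * v⁻¹ ^ 3) + (3 * v ^ 7 * v⁻¹ ^ 5) + (-v ^ 8) + (-2 * v ^ 8 * v⁻¹ ^ 2) + (5 * v ^ 8 * v⁻¹ ^ 4) + (3 * v ^ 8 * v⁻¹ ^ 6) + (v ^ 9 * v⁻¹ ^ 3) + (-v ^ 10) + (v ^ 10 * v⁻¹ ^ 4)) * hvw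

lemma e10_0 : Mmat v 0 1 0 = -((1 - ((v ^ 2) ^ 2)⁻¹) * v ^ 2) / qint v 2 := by
  simp only [Mmat, Nat.reduceAdd, Matrix.cons_val', Matrix.cons_val_zero,
    Matrix.cons_val_one, Matrix.head_cons, Matrix.empty_val', Matrix.cons_val_fin_one,
    Matrix.head_fin_const]
  refine genE10 (qint v 2) (qint v 2) _ _ h2 h2 ?_
  rw [qint_one hd, qint_two hd, qint_three hv hd]
  field_simp [hv]
  ring
end A0

section A2
variable {v : ℂ} (hv : v ≠ 0) (hd : v - v⁻¹ ≠ 0) (h2 : qint v 2 ≠ 0) (h4 : qint v 4 ≠ 0)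
include hv hd h2 h4

lemma tr2 : (Mmat v 2).trace =
    2 - (4 - (((v + v⁻¹) ^ 2 - 2) ^ 2 - 2) ^ 2) * ((qint v 4 ^ 2 - 1) / qint v 4 ^ 2) := by
  have hvw : v * v⁻¹ = 1 := mul_inv_cancel₀ hv
  have key : (1 - (v ^ 2) ^ 4) * qint v 3 * qint v 5 +
      (1 - ((v ^ 2) ^ 4)⁻¹) * qint v 3 * qint v 5
      = (4 - (((v + v⁻¹) ^ 2 - 2) ^ 2 - 2) ^ 2) * (qint v 4 ^ 2 - 1) := by
    rw [qint_three hv hd, qint_five hv hd, qint_four hd]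
    linear_combination ((-2) + (-20 * v⁻¹ ^ 2) + (16 * v⁻¹ ^ 4) + (-10 * v⁻¹ ^ 6) + (18 * v⁻¹ ^ 8) + (-18 * v⁻¹ ^ 10) + (10 * v⁻¹ ^ 12) + (-34 * v * v⁻¹) + (60 * v * v⁻¹ ^ 3) + (-32 * v * v⁻¹ ^ 5) + (62 * v * v⁻¹ ^ 7) + (-102 * v * v⁻¹ ^ 9) + (46 * v * v⁻¹ ^ 11) + (-20 * v ^ 2) + (82 * v ^ 2 * v⁻¹ ^ 2) + (-62 * v ^ 2 * v⁻¹ ^ 4) + (124 * v ^ 2 * v⁻¹ ^ 6) + (-276 * v ^ 2 * v⁻¹ ^ 8) + (140 * v ^ 2 * v⁻¹ ^ 10) + (60 * v ^ 3 * v⁻¹) + (-78 * v ^ 3 * v⁻¹ ^ 3) + (186 * v ^ 3 * v⁻¹ ^ 5) + (-516 * v ^ 3 * v⁻¹ ^ 7) + (300 * v ^ 3 * v⁻¹ ^ 9) + (16 * v ^ 4) + (-62 * v ^ 4 * v⁻¹ ^ 2) + (216 * v ^ 4 * v⁻¹ ^ 4) + (-734 * v ^ 4 * v⁻¹ ^ 6)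 + (502 * v ^ 4 * v⁻¹ ^ 8) + (-32 * v ^ 5 * v⁻¹) + (186 * v ^ 5 * v⁻¹ ^ 3) + (-824 * v ^ 5 * v⁻¹ ^ 5) + (674 * v ^ 5 * v⁻¹ ^ 7) + (-10 * v ^ 6) + (124 * v ^ 6 * v⁻¹ ^ 2) + (-734 * v ^ 6 * v⁻¹ ^ 4) + (744 * v ^ 6 * v⁻¹ ^ 6) + (62 * v ^ 7 * v⁻¹) + (-516 * v ^ 7 * v⁻¹ ^ 3) + (674 * v ^ 7 * v⁻¹ ^ 5) + (18 * v ^ 8) + (-276 * v ^ 8 * v⁻¹ ^ 2) + (502 * v ^ 8 * v⁻¹ ^ 4) + (-102 * v ^ 9 * v⁻¹) + (300 * v ^ 9 * v⁻¹ ^ 3) + (-18 * v ^ 10) + (140 * v ^ 10 * v⁻¹ ^ 2) + (46 * v ^ 11 * v⁻¹) + (10 * v ^ 12)) * hvw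
  simp only [Mmat, Nat.reduceAdd]
  rw [Matrix.trace_fin_two_of]
  calc 1 - (1 - (v ^ 2) ^ 4) * qint v 3 * qint v 5 / qint v 4 ^ 2 +
        (1 - (1 - ((v ^ 2) ^ 4)⁻¹) * qint v 3 * qint v 5 / qint v 4 ^ 2)
      = 2 - ((1 - (v ^ 2) ^ 4) * qint v 3 * qint v 5 +
          (1 - ((v ^ 2) ^ 4)⁻¹) * qint v 3 * qint v 5) / qint v 4 ^ 2 := by ring
    _ = 2 - (4 - (((v + v⁻¹) ^ 2 - 2) ^ 2 - 2) ^ 2) * ((qint v 4 ^ 2 - 1) / qint v 4 ^ 2) := by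
        rw [key, mul_div_assoc]

lemma det2 : (Mmat v 2).det = 1 := by
  simp only [Mmat, Nat.reduceAdd]
  rw [Matrix.det_fin_two_of]
  refine genDet (qint v 2) (qint v 4) _ _ _ _ h2 h4 ?_
  have hvw : v * v⁻¹ = 1 := mul_inv_cancel₀ hv
  rw [qint_two hd, qint_three hv hd, qint_four hd, qint_five hv hd]
  linear_combination ((2 * v⁻¹ ^ 8) + (4 * v⁻¹ ^ 10) + (4 * v⁻¹ ^ 12) + (2 * v⁻¹ ^ 14) + (-v⁻¹ ^ 16) + (-2 * v⁻¹ ^ 18) + (-2 * v⁻¹ ^ 20) + (-v⁻¹ ^ 22) + (-4 * v * v⁻¹) + (-16 * v * v⁻¹ ^ 3) + (-32 * v * v⁻¹ ^ 5) + (-32 * v * v⁻¹ ^ 7) + (-11 * v * v⁻¹ ^ 9) + (18 * v * v⁻¹ ^ 11) + (38 * v * v⁻¹ ^ 13) + (37 * v * v⁻¹ ^ 15) + (24 * v * v⁻¹ ^ 17) + (8 * v * v⁻¹ ^ 19) + (-4 * v ^ 2 * v⁻¹ ^ 2) + (-16 * v ^ 2 * v⁻¹ ^ 4) + (-16 * v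 ^ 2 * v⁻¹ ^ 6) + (4 * v ^ 2 * v⁻¹ ^ 8) + (25 * v ^ 2 * v⁻¹ ^ 10) + (36 * v ^ 2 * v⁻¹ ^ 12) + (30 * v ^ 2 * v⁻¹ ^ 14) + (19 * v ^ 2 * v⁻¹ ^ 16) + (6 * v ^ 2 * v⁻¹ ^ 18) + (-v ^ 2 * v⁻¹ ^ 20) + (-16 * v ^ 3 * v⁻¹) + (-52 * v ^ 3 * v⁻¹ ^ 3) + (-64 * v ^ 3 * v⁻¹ ^ 5) + (-16 * v ^ 3 * v⁻¹ ^ 7) + (50 * v ^ 3 * v⁻¹ ^ 9) + (95 * v ^ 3 * v⁻¹ ^ 11) + (95 * v ^ 3 * v⁻¹ ^ 13) + (62 * v ^ 3 * v⁻¹ ^ 15) + (21 * v ^ 3 * v⁻¹ ^ 17) + (-16 * v ^ 4 * v⁻¹ ^ 2) + (-24 * v ^ 4 * v⁻¹ ^ 4) + (24 * v ^ 4 * v⁻¹ ^ 6) + (76 * v ^ 4 * v⁻¹ ^ 8) + (96 * v ^ 4 * v⁻¹ ^ 10) + (81 * v ^ 4 * v⁻¹ ^ 12) + (51 * v ^ 4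 * v⁻¹ ^ 14) + (16 * v ^ 4 * v⁻¹ ^ 16) + (-2 * v ^ 4 * v⁻¹ ^ 18) + (-32 * v ^ 5 * v⁻¹) + (-64 * v ^ 5 * v⁻¹ ^ 3) + (-10 * v ^ 5 * v⁻¹ ^ 5) + (84 * v ^ 5 * v⁻¹ ^ 7) + (146 * v ^ 5 * v⁻¹ ^ 9) + (153 * v ^ 5 * v⁻¹ ^ 11) + (115 * v ^ 5 * v⁻¹ ^ 13) + (47 * v ^ 5 * v⁻¹ ^ 15) + (6 * v ^ 5 * v⁻¹ ^ 17) + (v ^ 5 * v⁻¹ ^ 19) + (-16 * v ^ 6 * v⁻¹ ^ 2) + (24 * v ^ 6 * v⁻¹ ^ 4) + (110 * v ^ 6 * v⁻¹ ^ 6) + (146 * v ^ 6 * v⁻¹ ^ 8) + (138 * v ^ 6 * v⁻¹ ^ 10) + (109 * v ^ 6 * v⁻¹ ^ 12) + (55 * v ^ 6 * v⁻¹ ^ 14) + (16 * v ^ 6 * v⁻¹ ^ 16) + (6 * v ^ 6 * v⁻¹ ^ 18) + (v ^ 6 * v⁻¹ ^ 20) + (-32 * v ^ 7 * v⁻¹)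 + (-16 * v ^ 7 * v⁻¹ ^ 3) + (84 * v ^ 7 * v⁻¹ ^ 5) + (154 * v ^ 7 * v⁻¹ ^ 7) + (179 * v ^ 7 * v⁻¹ ^ 9) + (170 * v ^ 7 * v⁻¹ ^ 11) + (105 * v ^ 7 * v⁻¹ ^ 13) + (43 * v ^ 7 * v⁻¹ ^ 15) + (19 * v ^ 7 * v⁻¹ ^ 17) + (6 * v ^ 7 * v⁻¹ ^ 19) + (v ^ 7 * v⁻¹ ^ 21) + (2 * v ^ 8) + (4 * v ^ 8 * v⁻¹ ^ 2) + (76 * v ^ 8 * v⁻¹ ^ 4) + (146 * v ^ 8 * v⁻¹ ^ 6) + (152 * v ^ 8 * v⁻¹ ^ 8) + (159 * v ^ 8 * v⁻¹ ^ 10) + (122 * v ^ 8 * v⁻¹ ^ 12) + (73 * v ^ 8 * v⁻¹ ^ 14) + (43 * v ^ 8 * v⁻¹ ^ 16) + (19 * v ^ 8 * v⁻¹ ^ 18) + (6 * v ^ 8 * v⁻¹ ^ 20) + (v ^ 8 * v⁻¹ ^ 22) + (-11 * v ^ 9 * v⁻¹) + (50 * v ^ 9 * v⁻¹ ^ 3)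 + (146 * v ^ 9 * v⁻¹ ^ 5) + (179 * v ^ 9 * v⁻¹ ^ 7) + (198 * v ^ 9 * v⁻¹ ^ 9) + (155 * v ^ 9 * v⁻¹ ^ 11) + (82 * v ^ 9 * v⁻¹ ^ 13) + (37 * v ^ 9 * v⁻¹ ^ 15) + (10 * v ^ 9 * v⁻¹ ^ 17) + (v ^ 9 * v⁻¹ ^ 19) + (4 * v ^ 10) + (25 * v ^ 10 * v⁻¹ ^ 2) + (96 * v ^ 10 * v⁻¹ ^ 4) + (138 * v ^ 10 * v⁻¹ ^ 6) + (159 * v ^ 10 * v⁻¹ ^ 8) + (162 * v ^ 10 * v⁻¹ ^ 10) + (123 * v ^ 10 * v⁻¹ ^ 12) + (82 * v ^ 10 * v⁻¹ ^ 14) + (37 * v ^ 10 * v⁻¹ ^ 16) + (10 * v ^ 10 * v⁻¹ ^ 18) + (v ^ 10 * v⁻¹ ^ 20) + (18 * v ^ 11 * v⁻¹) + (95 * v ^ 11 * v⁻¹ ^ 3) + (153 * v ^ 11 * v⁻¹ ^ 5) + (170 * v ^ 11 * v⁻¹ ^ 7) + (155 * v ^ 11 * v⁻¹ ^ 9) +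 (102 * v ^ 11 * v⁻¹ ^ 11) + (55 * v ^ 11 * v⁻¹ ^ 13) + (18 * v ^ 11 * v⁻¹ ^ 15) + (3 * v ^ 11 * v⁻¹ ^ 17) + (4 * v ^ 12) + (36 * v ^ 12 * v⁻¹ ^ 2) + (81 * v ^ 12 * v⁻¹ ^ 4) + (109 * v ^ 12 * v⁻¹ ^ 6) + (122 * v ^ 12 * v⁻¹ ^ 8) + (123 * v ^ 12 * v⁻¹ ^ 10) + (102 * v ^ 12 * v⁻¹ ^ 12) + (55 * v ^ 12 * v⁻¹ ^ 14) + (18 * v ^ 12 * v⁻¹ ^ 16) + (3 * v ^ 12 * v⁻¹ ^ 18) + (38 * v ^ 13 * v⁻¹) + (95 * v ^ 13 * v⁻¹ ^ 3) + (115 * v ^ 13 * v⁻¹ ^ 5) + (105 * v ^ 13 * v⁻¹ ^ 7) + (82 * v ^ 13 * v⁻¹ ^ 9) + (55 * v ^ 13 * v⁻¹ ^ 11) + (20 * v ^ 13 * v⁻¹ ^ 13) + (3 * v ^ 13 * v⁻¹ ^ 15) + (2 * v ^ 14) + (30 * v ^ 14 * v⁻¹ ^ 2) + (51 * v ^ 14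 * v⁻¹ ^ 4) + (55 * v ^ 14 * v⁻¹ ^ 6) + (73 * v ^ 14 * v⁻¹ ^ 8) + (82 * v ^ 14 * v⁻¹ ^ 10) + (55 * v ^ 14 * v⁻¹ ^ 12) + (20 * v ^ 14 * v⁻¹ ^ 14) + (3 * v ^ 14 * v⁻¹ ^ 16) + (37 * v ^ 15 * v⁻¹) + (62 * v ^ 15 * v⁻¹ ^ 3) + (47 * v ^ 15 * v⁻¹ ^ 5) + (43 * v ^ 15 * v⁻¹ ^ 7) + (37 * v ^ 15 * v⁻¹ ^ 9) + (18 * v ^ 15 * v⁻¹ ^ 11) + (3 * v ^ 15 * v⁻¹ ^ 13) + (-v ^ 16) + (19 * v ^ 16 * v⁻¹ ^ 2) + (16 * v ^ 16 * v⁻¹ ^ 4) + (16 * v ^ 16 * v⁻¹ ^ 6) + (43 * v ^ 16 * v⁻¹ ^ 8) + (37 * v ^ 16 * v⁻¹ ^ 10) + (18 * v ^ 16 * v⁻¹ ^ 12) + (3 * v ^ 16 * v⁻¹ ^ 14) + (24 * v ^ 17 * v⁻¹) + (21 * v ^ 17 * v⁻¹ ^ 3) + (6 * v ^ 17 * v⁻¹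 ^ 5) + (19 * v ^ 17 * v⁻¹ ^ 7) + (10 * v ^ 17 * v⁻¹ ^ 9) + (3 * v ^ 17 * v⁻¹ ^ 11) + (-2 * v ^ 18) + (6 * v ^ 18 * v⁻¹ ^ 2) + (-2 * v ^ 18 * v⁻¹ ^ 4) + (6 * v ^ 18 * v⁻¹ ^ 6) + (19 * v ^ 18 * v⁻¹ ^ 8) + (10 * v ^ 18 * v⁻¹ ^ 10) + (3 * v ^ 18 * v⁻¹ ^ 12) + (8 * v ^ 19 * v⁻¹) + (v ^ 19 * v⁻¹ ^ 5) + (6 * v ^ 19 * v⁻¹ ^ 7) + (v ^ 19 * v⁻¹ ^ 9) + (-2 * v ^ 20) + (-v ^ 20 * v⁻¹ ^ 2) + (v ^ 20 * v⁻¹ ^ 6) + (6 * v ^ 20 * v⁻¹ ^ 8) + (v ^ 20 * v⁻¹ ^ 10) + (v ^ 21 * v⁻¹ ^ 7) + (-v ^ 22) + (v ^ 22 * v⁻¹ ^ 8)) * hvw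

lemma e10_2 : Mmat v 2 1 0 = -((1 - ((v ^ 2) ^ 4)⁻¹) * v ^ 4) / qint v 4 := by
  simp only [Mmat, Nat.reduceAdd, Matrix.cons_val', Matrix.cons_val_zero,
    Matrix.cons_val_one, Matrix.head_cons, Matrix.empty_val', Matrix.cons_val_fin_one,
    Matrix.head_fin_const]
  refine genE10 (qint v 2) (qint v 4) _ _ h2 h4 ?_
  have hvw : v * v⁻¹ = 1 := mul_inv_cancel₀ hv
  rw [qint_two hd, qint_three hv hd, qint_five hv hd]
  linear_combination ((-v⁻¹) + (-v⁻¹ ^ 3) + (v⁻¹ ^ 9) + (v⁻¹ ^ 11) + (v) + (-v * v⁻¹ ^ 8) + (v ^ 3) + (-v ^ 3 * v⁻¹ ^ 8)) * hvw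
end A2

noncomputable def cheb (t : ℝ) : ℕ → ℝ
  | 0 => 0
  | 1 => 1
  | (n + 2) => t * cheb t (n + 1) - cheb t n

lemma cheb_mono {t : ℝ} (ht : 2 < t) : ∀ k, cheb t k < cheb t (k + 1) ∧ 0 ≤ cheb t k := by
  intro k
  induction k with
  | zero => simp [cheb]
  | succ n ih =>
    obtain ⟨h1, h2⟩ := ih
    constructor
    · show cheb t (n + 1) < cheb t (n + 2)
      rw [cheb]
      nlinarith
    · linarith

lemma cheb_pos {t : ℝ} (ht : 2 < t) {k : ℕ} (hk : 1 ≤ k) : 0 < cheb t k := by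
  obtain ⟨j, rfl⟩ := Nat.exists_eq_add_of_le hk
  have := cheb_mono ht j
  have h1 : cheb t j < cheb t (j + 1) := this.1
  have h2 : 0 ≤ cheb t j := this.2
  have : 1 + j = j + 1 := by omega
  rw [this]
  linarith

lemma infOrder (M : Matrix (Fin 2) (Fin 2) ℂ) (t : ℝ) (ht : 2 < t)
    (htr : M.trace = (t : ℂ)) (hdet : M.det = 1) (h10 : M 1 0 ≠ 0) :
    ∀ k : ℕ, 1 ≤ k → ∀ c : ℂ, M ^ k ≠ c • (1 : Matrix (Fin 2) (Fin 2) ℂ) := by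
  have hCH : M ^ 2 = (t : ℂ) • M - 1 := by
    rw [Matrix.trace_fin_two] at htr
    rw [Matrix.det_fin_two] at hdet
    ext i j
    rw [pow_two]
    fin_cases i <;> fin_cases j <;>
      simp [Matrix.mul_apply, Fin.sum_univ_two, Matrix.one_apply, Matrix.smul_apply,
        Matrix.sub_apply]
    · linear_combination M 0 0 * htr - hdet
    · linear_combination M 0 1 * htr
    · linear_combination M 1 0 * htr
    · linear_combination M 1 1 * htr - hdet
  have hpow : ∀ j : ℕ, M ^ (j + 1) =
      (cheb t (j + 1) : ℂ) • M - (cheb t j : ℂ) • (1 : Matrix (Fin 2) (Fin 2) ℂ) := by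
    intro j
    induction j with
    | zero => simp [cheb]
    | succ n ih =>
      rw [pow_succ, ih]
      have h2 : (cheb t (n + 1) : ℂ) • M * M = (cheb t (n + 1) : ℂ) • (M ^ 2) := by
        rw [smul_mul_assoc, pow_two]
      rw [sub_mul, h2, hCH, smul_mul_assoc, one_mul]
      have hc : (cheb t (n + 1 + 1) : ℂ) = (t : ℂ) * (cheb t (n + 1) : ℂ) - (cheb t n : ℂ) := by
        rw [show n + 1 + 1 = n + 2 from rfl, cheb]
        push_cast
        ring
      rw [hc]
      ext i j
      simp [Matrix.smul_apply, Matrix.sub_apply, Matrix.one_apply]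
      split <;> ring
  intro k hk c hEq
  obtain ⟨j, rfl⟩ := Nat.exists_eq_add_of_le hk
  rw [show 1 + j = j + 1 by omega] at hEq
  have hP : (0:ℝ) < cheb t (j + 1) := cheb_pos ht (by omega)
  rw [hpow j] at hEq
  have h5 := congrFun (congrFun hEq 1) 0
  simp [Matrix.smul_apply, Matrix.sub_apply, Matrix.one_apply] at h5
  rcases h5 with h5 | h5
  · exact absurd h5 (by exact_mod_cast hP.ne')
  · exact h10 h5

lemma vexists (r s : ℕ) (hr : 5 ≤ r) :
    ∃ v : ℂ, v ≠ 0 ∧ v ^ 2 = Complex.exp (2 * Real.pi * Complex.I * (s / r)) ∧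
      v + v⁻¹ = ((2 * Real.cos (Real.pi * s / r) : ℝ) : ℂ) := by
  set θ : ℝ := Real.pi * s / r with hθdef
  refine ⟨Complex.exp (θ * Complex.I), Complex.exp_ne_zero _, ?_, ?_⟩
  · rw [← Complex.exp_nat_mul]
    congr 1
    push_cast [hθdef]
    ring
  · have h1 : Complex.exp ((θ:ℂ) * Complex.I) = Complex.cos θ + Complex.sin θ * Complex.I :=
      Complex.exp_mul_I _
    have h2 : (Complex.exp ((θ:ℂ) * Complex.I))⁻¹ = Complex.cos θ - Complex.sin θ * Complex.I := by
      rw [← Complex.exp_neg]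
      rw [show -((θ:ℂ) * Complex.I) = ((-θ : ℝ) : ℂ) * Complex.I by push_cast; ring]
      rw [Complex.exp_mul_I]
      push_cast
      rw [Complex.cos_neg, Complex.sin_neg]
      ring
    rw [h2, h1]
    push_cast [Complex.ofReal_cos]
    ring

lemma prim_facts {v : ℂ} {r : ℕ} (hr : 5 ≤ r) (hp : IsPrimitiveRoot (v ^ 2) r) :
    v ≠ 0 ∧ v - v⁻¹ ≠ 0 ∧ v + v⁻¹ ≠ 0 := by
  have hpow := hp.pow_eq_one
  have hv : v ≠ 0 := by
    intro h
    rw [h] at hpow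
    simp [zero_pow, show r ≠ 0 by omega] at hpow
  refine ⟨hv, ?_, ?_⟩
  · intro h
    have hv2 : v ^ 2 = 1 := by
      have := sub_eq_zero.mp h
      field_simp [hv] at this
      linear_combination this
    have h3 : r ∣ 1 := hp.dvd_of_pow_eq_one 1 (by rw [pow_one, hv2])
    have := Nat.le_of_dvd (by norm_num) h3
    omega
  · intro h
    have hv2 : v ^ 2 = -1 := by
      have : v = -v⁻¹ := by linear_combination h
      have h2 : v * v = v * (-v⁻¹) := by rw [← this]
      rw [mul_neg, mul_inv_cancel₀ hv] at h2
      linear_combination h2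
    have : r ∣ 2 := hp.dvd_of_pow_eq_one 2 (by rw [hv2]; norm_num)
    have := Nat.le_of_dvd (by norm_num) this
    omega

lemma caseA0 (r s : ℕ) (hr : 5 ≤ r) (hco : Nat.Coprime s r) (h3 : r < 3 * s)
    (h3' : 3 * s < 2 * r) :
    ∃ v : ℂ, v ≠ 0 ∧ IsPrimitiveRoot (v ^ 2) r ∧ qint v 2 ≠ 0 ∧ qint v (0 + 2) ≠ 0 ∧
      ∀ k : ℕ, 1 ≤ k → ∀ c : ℂ, Mmat v 0 ^ k ≠ c • (1 : Matrix (Fin 2) (Fin 2) ℂ) := by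
  obtain ⟨v, hv, hveq, hsum⟩ := vexists r s hr
  have hp : IsPrimitiveRoot (v ^ 2) r := by
    rw [hveq]; exact Complex.isPrimitiveRoot_exp_of_coprime s r (by omega) hco
  obtain ⟨-, hd, hy⟩ := prim_facts hr hp
  set x : ℝ := 2 * Real.cos (Real.pi * s / r) with hxdef
  have hq2 : qint v 2 ≠ 0 := by rw [qint_two hd]; exact hy
  have hx0 : x ≠ 0 := by
    intro h
    apply hy
    rw [hsum, h]
    norm_num
  have hπ := Real.pi_pos
  have hrpos : (0:ℝ) < r := by exact_mod_cast (by omega : 0 < r)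
  have hc1 : (r:ℝ) < 3 * s := by exact_mod_cast h3
  have hc2 : (3:ℝ) * s < 2 * r := by exact_mod_cast h3'
  set θ : ℝ := Real.pi * s / r with hθdef
  have hθ1 : Real.pi / 3 < θ := by
    rw [hθdef, div_lt_div_iff₀ (by norm_num) hrpos]
    nlinarith
  have hθ2 : θ < 2 * Real.pi / 3 := by
    rw [hθdef, div_lt_div_iff₀ hrpos (by norm_num)]
    nlinarith
  have hθnn : 0 ≤ θ := by
    rw [hθdef]; positivity
  have hθpi : θ ≤ Real.pi := by linarith
  have hcos1 : Real.cos θ < 1 / 2 := by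
    have := Real.cos_lt_cos_of_nonneg_of_le_pi (by positivity) hθpi hθ1
    rwa [Real.cos_pi_div_three] at this
  have hcos2 : -(1 / 2) < Real.cos θ := by
    have := Real.cos_lt_cos_of_nonneg_of_le_pi hθnn (by linarith) hθ2
    rwa [show 2 * Real.pi / 3 = Real.pi - Real.pi / 3 by ring, Real.cos_pi_sub,
      Real.cos_pi_div_three] at this
  have hu1 : x ^ 2 < 1 := by rw [hxdef]; nlinarith
  have hu0 : 0 < x ^ 2 := by rcases hx0.lt_or_gt with h | h <;> nlinarith
  set t : ℝ := 2 - (4 - x ^ 2) * (x ^ 2 - 1) with htdef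
  have ht : 2 < t := by rw [htdef]; nlinarith
  have htr : (Mmat v 0).trace = (t : ℂ) := by
    rw [tr0 hv hd hq2, hsum, htdef]
    push_cast
    ring
  have hdet := det0 hv hd hq2
  have h10 : Mmat v 0 1 0 ≠ 0 := by
    rw [e10_0 hv hd hq2]
    have hne : ((v ^ 2) ^ 2 : ℂ) ≠ 1 :=
      hp.pow_ne_one_of_pos_of_lt (by norm_num : 2 ≠ 0) (by omega : 2 < r)
    apply div_ne_zero _ hq2
    apply neg_ne_zero.mpr
    apply mul_ne_zero _ (pow_ne_zero 2 hv)
    intro h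
    apply hne
    have h2 : (((v ^ 2) ^ 2 : ℂ))⁻¹ = 1 := by linear_combination -h
    rwa [inv_eq_one] at h2
  exact ⟨v, hv, hp, hq2, hq2, infOrder _ t ht htr hdet h10⟩

lemma case10 :
    ∃ v : ℂ, v ≠ 0 ∧ IsPrimitiveRoot (v ^ 2) 10 ∧ qint v 2 ≠ 0 ∧ qint v (2 + 2) ≠ 0 ∧
      ∀ k : ℕ, 1 ≤ k → ∀ c : ℂ, Mmat v 2 ^ k ≠ c • (1 : Matrix (Fin 2) (Fin 2) ℂ) := by
  obtain ⟨v, hv, hveq, hsum⟩ := vexists 10 3 (by norm_num)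
  have hp : IsPrimitiveRoot (v ^ 2) 10 := by
    rw [hveq]
    exact Complex.isPrimitiveRoot_exp_of_coprime 3 10 (by norm_num) (by norm_num)
  obtain ⟨-, hd, hy⟩ := prim_facts (by norm_num) hp
  have hcast : Real.pi * ((3:ℕ):ℝ) / ((10:ℕ):ℝ) = Real.pi * 3 / 10 := by norm_num
  rw [hcast] at hsum
  set x : ℝ := 2 * Real.cos (Real.pi * 3 / 10) with hxdef
  have hq2 : qint v 2 ≠ 0 := by rw [qint_two hd]; exact hy
  have hvw : v * v⁻¹ = 1 := mul_inv_cancel₀ hv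
  have h5 : Real.sqrt 5 ^ 2 = 5 := Real.sq_sqrt (by norm_num)
  have h5nn : 0 ≤ Real.sqrt 5 := Real.sqrt_nonneg 5
  have h5lb : 2 < Real.sqrt 5 := by nlinarith
  have h5ub : Real.sqrt 5 < 9 / 4 := by nlinarith
  have hx2 : x ^ 2 = (5 - Real.sqrt 5) / 2 := by
    have hc : Real.cos (Real.pi * 3 / 10) = Real.sin (Real.pi / 5) := by
      rw [← Real.cos_pi_div_two_sub]
      congr 1
      ring
    have hsc := Real.sin_sq_add_cos_sq (Real.pi / 5)
    rw [Real.cos_pi_div_five] at hsc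
    rw [hxdef, hc]
    nlinarith [hsc, h5]
  have hq4v : qint v 4 = ((x * (x ^ 2 - 2) : ℝ) : ℂ) := by
    rw [qint_four hd]
    have e2 : v ^ 2 + v⁻¹ ^ 2 = (v + v⁻¹) ^ 2 - 2 := by linear_combination (-2 : ℂ) * hvw
    rw [e2, hsum]
    push_cast
    ring
  have hq4r : x * (x ^ 2 - 2) ≠ 0 := by
    apply mul_ne_zero
    · intro h
      rw [h] at hx2
      nlinarith
    · intro h
      rw [hx2] at h
      nlinarith
  have hq4 : qint v 4 ≠ 0 := by
    rw [hq4v]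
    exact Complex.ofReal_ne_zero.mpr hq4r
  set t : ℝ := 2 - (4 - ((x ^ 2 - 2) ^ 2 - 2) ^ 2) * ((x * (x ^ 2 - 2)) ^ 2 - 1) /
      (x * (x ^ 2 - 2)) ^ 2 with htdef
  have htr : (Mmat v 2).trace = (t : ℂ) := by
    rw [tr2 hv hd hq2 hq4, hsum, hq4v, htdef]
    push_cast
    ring
  have hden : (5 - 2 * Real.sqrt 5 : ℝ) ≠ 0 := by nlinarith
  have htval : t = 1 + Real.sqrt 5 := by
    have hB : (x * (x ^ 2 - 2)) ^ 2 = 5 - 2 * Real.sqrt 5 := by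
      rw [show (x * (x ^ 2 - 2)) ^ 2 = x ^ 2 * (x ^ 2 - 2) ^ 2 by ring, hx2]
      linear_combination (7 / 8 - Real.sqrt 5 / 8) * h5
    have hA : ((x ^ 2 - 2) ^ 2 - 2) ^ 2 = (3 + Real.sqrt 5) / 2 := by
      rw [hx2]
      linear_combination (Real.sqrt 5 ^ 2 / 16 - Real.sqrt 5 / 4 - 5 / 16) * h5
    have hq : (4 - (3 + Real.sqrt 5) / 2) * ((5 - 2 * Real.sqrt 5) - 1)
        = (1 - Real.sqrt 5) * (5 - 2 * Real.sqrt 5) := by linear_combination -h5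
    rw [htdef, hA, hB, hq, mul_div_cancel_right₀ _ hden]
    ring
  have ht : 2 < t := by rw [htval]; nlinarith
  have hdet := det2 hv hd hq2 hq4
  have h10 : Mmat v 2 1 0 ≠ 0 := by
    rw [e10_2 hv hd hq2 hq4]
    have hne : ((v ^ 2) ^ 4 : ℂ) ≠ 1 :=
      hp.pow_ne_one_of_pos_of_lt (by norm_num : 4 ≠ 0) (by norm_num : 4 < 10)
    apply div_ne_zero _ hq4
    apply neg_ne_zero.mpr
    apply mul_ne_zero _ (pow_ne_zero 4 hv)
    intro h
    apply hne
    have h2 : (((v ^ 2) ^ 4 : ℂ))⁻¹ = 1 := by linear_combination -h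
    rwa [inv_eq_one] at h2
  exact ⟨v, hv, hp, hq2, hq4, infOrder _ t ht htr hdet h10⟩

lemma pick_s (r : ℕ) (hr : 5 ≤ r) (h6 : r ≠ 6) (h10 : r ≠ 10) :
    ∃ s : ℕ, Nat.Coprime s r ∧ r < 3 * s ∧ 3 * s < 2 * r := by
  rcases Nat.even_or_odd r with hev | hodd
  · obtain ⟨m, rfl⟩ := hev
    rcases Nat.even_or_odd m with hevm | hoddm
    · obtain ⟨j, rfl⟩ := hevm
      refine ⟨j + j + 1, ?_, by omega, by omega⟩
      have cm : Nat.Coprime (j + j + 1) (j + j) := by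
        rw [add_comm]
        exact Nat.coprime_add_self_left.mpr (Nat.coprime_one_left _)
      have c2 : Nat.Coprime (j + j + 1) 2 := by
        rw [Nat.Coprime, Nat.gcd_comm, show j + j + 1 = 1 + j * 2 by omega,
          Nat.gcd_add_mul_right_right 2 1 j, Nat.gcd_one_right]
      have h := Nat.Coprime.mul_right c2 cm
      rwa [show 2 * (j + j) = j + j + (j + j) by omega] at h
    · obtain ⟨j, rfl⟩ := hoddm
      refine ⟨2 * j + 1 + 2, ?_, by omega, by omega⟩
      have cm : Nat.Coprime (2 * j + 1 + 2) (2 * j + 1) := by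
        rw [add_comm]
        apply Nat.coprime_add_self_left.mpr
        rw [Nat.Coprime, show 2 * j + 1 = 1 + j * 2 by omega,
          Nat.gcd_add_mul_right_right 2 1 j, Nat.gcd_one_right]
      have c2 : Nat.Coprime (2 * j + 1 + 2) 2 := by
        rw [Nat.Coprime, Nat.gcd_comm, show 2 * j + 1 + 2 = 1 + (j + 1) * 2 by omega,
          Nat.gcd_add_mul_right_right 2 1 (j + 1), Nat.gcd_one_right]
      have h := Nat.Coprime.mul_right c2 cm
      rwa [show 2 * (2 * j + 1) = 2 * j + 1 + (2 * j + 1) by omega] at h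
  · obtain ⟨m, rfl⟩ := hodd
    refine ⟨m, ?_, by omega, by omega⟩
    rw [Nat.Coprime, show 2 * m + 1 = 1 + 2 * m by omega,
      Nat.gcd_add_mul_right_right m 1 2, Nat.gcd_one_right]

/-- For every r ≥ 5 with r ≠ 6 there exist a ∈ {0, 2} and v with q = v² a
primitive r-th root of unity such that M_a(v) has infinite order in PGL₂(ℂ). -/
theorem stmt_15 (r : ℕ) (hr : 5 ≤ r) (hr6 : r ≠ 6) :
    ∃ a ∈ ({0, 2} : Set ℕ), ∃ v : ℂ, v ≠ 0 ∧ IsPrimitiveRoot (v ^ 2) r ∧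
      qint v 2 ≠ 0 ∧ qint v (a + 2) ≠ 0 ∧
      ∀ k : ℕ, 1 ≤ k → ∀ c : ℂ,
        Mmat v a ^ k ≠ c • (1 : Matrix (Fin 2) (Fin 2) ℂ) := by
  by_cases h10 : r = 10
  · subst h10
    exact ⟨2, by simp, case10⟩
  · obtain ⟨s, hco, hs1, hs2⟩ := pick_s r hr hr6 h10
    exact ⟨0, by simp, caseA0 r s hr hco hs1 hs2⟩
end
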